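/- arXiv:2510.18094 — 11 statements merged into one kernel-verified Lean document; each statement's English description precedes it below -/
import Mathlib

section
/- Let d ≥ 1, α > 0, and let V₁, V₂ : (0,∞)^d → ℝ be (−α)-homogeneous functions (i.e. V_k(c·x) = c^{−α} V_k(x) for all c > 0 and x ∈ (0,∞)^d) such that V_k(u) ≥ 1 for every u ∈ (0,∞)^d with min_{1≤i≤d} u_i = 1 and k = 1,2. Then sup_{x ∈ (0,∞)^d} |exp(−V₁(x)) − exp(−V₂(x))| ≤ (1/e) · sup { |V₁(u) − V₂(u)| : u ∈ (0,∞)^d, min_{1≤i≤d} u_i = 1 }. -/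
/-- Analytic core: for `t > 0` and `a, b ≥ 1`,
`|exp (-(t*a)) - exp (-(t*b))| ≤ exp (-1) * |a - b|`. -/
lemma exp_diff_bound {t a b : ℝ} (ht : 0 < t) (ha : 1 ≤ a) (hb : 1 ≤ b) :
    |Real.exp (-(t * a)) - Real.exp (-(t * b))| ≤ Real.exp (-1) * |a - b| := by
  have key : ∀ a b : ℝ, 1 ≤ a → 1 ≤ b → a ≤ b →
      Real.exp (-(t * a)) - Real.exp (-(t * b)) ≤ Real.exp (-1) * (b - a) := by
    intro a b ha hb hab
    have h1 : Real.exp (-(t * a)) - Real.exp (-(t * b))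
        = Real.exp (-(t * a)) * (1 - Real.exp (-(t * (b - a)))) := by
      rw [mul_sub, mul_one, ← Real.exp_add]; ring_nf
    rw [h1]
    have h2 : 1 - Real.exp (-(t * (b - a))) ≤ t * (b - a) := by
      have := Real.add_one_le_exp (-(t * (b - a)))
      linarith
    have h2nn : 0 ≤ 1 - Real.exp (-(t * (b - a))) := by
      have : Real.exp (-(t * (b - a))) ≤ 1 := by
        rw [Real.exp_le_one_iff]
        nlinarith
      linarith
    have h3 : Real.exp (-(t * a)) ≤ Real.exp (-t) := by
      apply Real.exp_le_exp.mpr; nlinarith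
    have h4 : t * Real.exp (-t) ≤ Real.exp (-1) := by
      have h5 : t ≤ Real.exp (t - 1) := by
        have := Real.add_one_le_exp (t - 1); linarith
      calc t * Real.exp (-t) ≤ Real.exp (t - 1) * Real.exp (-t) := by
            apply mul_le_mul_of_nonneg_right h5 (Real.exp_nonneg _)
        _ = Real.exp (-1) := by rw [← Real.exp_add]; ring_nf
    calc Real.exp (-(t * a)) * (1 - Real.exp (-(t * (b - a))))
        ≤ Real.exp (-t) * (t * (b - a)) := by
          apply mul_le_mul h3 h2 h2nn (Real.exp_nonneg _)
      _ = (t * Real.exp (-t)) * (b - a) := by ring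
      _ ≤ Real.exp (-1) * (b - a) := by
          apply mul_le_mul_of_nonneg_right h4; linarith
  rcases le_total a b with h | h
  · have hd1 : Real.exp (-(t * b)) ≤ Real.exp (-(t * a)) := by
      apply Real.exp_le_exp.mpr; nlinarith
    rw [abs_of_nonneg (by linarith), abs_of_nonpos (by linarith)]
    have := key a b ha hb h; linarith
  · have hd1 : Real.exp (-(t * a)) ≤ Real.exp (-(t * b)) := by
      apply Real.exp_le_exp.mpr; nlinarith
    rw [abs_of_nonpos (by linarith), abs_of_nonneg (by linarith)]
    have := key b a hb ha h; linarith

/-- Scaling inequality (eq. (5.1)): for (−α)-homogeneous exponent functions `V₁, V₂`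
that are ≥ 1 on the section `{u : min_i u_i = 1}`, the Kolmogorov distance of
`exp (−V₁)` and `exp (−V₂)` is bounded by `(1/e)` times any upper bound `C` of
`|V₁ − V₂|` on that section. -/
theorem kolmogorov_scaling_bound
    (d : ℕ) (hd : 0 < d) (α : ℝ) (hα : 0 < α)
    (V₁ V₂ : (Fin d → ℝ) → ℝ)
    (hhom₁ : ∀ c : ℝ, 0 < c → ∀ x : Fin d → ℝ, (∀ i, 0 < x i) →
      V₁ (c • x) = c ^ (-α) * V₁ x)
    (hhom₂ : ∀ c : ℝ, 0 < c → ∀ x : Fin d → ℝ, (∀ i, 0 < x i) →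
      V₂ (c • x) = c ^ (-α) * V₂ x)
    (hlb₁ : ∀ u : Fin d → ℝ, (∀ i, 0 < u i) → (⨅ i, u i) = 1 → 1 ≤ V₁ u)
    (hlb₂ : ∀ u : Fin d → ℝ, (∀ i, 0 < u i) → (⨅ i, u i) = 1 → 1 ≤ V₂ u)
    (C : ℝ)
    (hC : ∀ u : Fin d → ℝ, (∀ i, 0 < u i) → (⨅ i, u i) = 1 → |V₁ u - V₂ u| ≤ C) :
    ∀ x : Fin d → ℝ, (∀ i, 0 < x i) →
      |Real.exp (-V₁ x) - Real.exp (-V₂ x)| ≤ (1 / Real.exp 1) * C := by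
  intro x hx
  haveI : Nonempty (Fin d) := ⟨⟨0, hd⟩⟩
  obtain ⟨i0, hi0⟩ := Finite.exists_min x
  have hm : (⨅ i, x i) = x i0 := by
    apply le_antisymm
    · exact ciInf_le (Finite.bddBelow_range x) i0
    · exact le_ciInf hi0
  set m := x i0 with hmdef
  have hmpos : 0 < m := hx i0
  set u : Fin d → ℝ := m⁻¹ • x with hu
  have hupos : ∀ i, 0 < u i := fun i => mul_pos (inv_pos.mpr hmpos) (hx i)
  have huinf : (⨅ i, u i) = 1 := by
    apply le_antisymm
    · calc (⨅ i, u i) ≤ u i0 := ciInf_le (Finite.bddBelow_range u) i0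
        _ = 1 := by simp [hu, inv_mul_cancel₀ hmpos.ne']; exact inv_mul_cancel₀ hmpos.ne'
    · apply le_ciInf
      intro i
      have : m⁻¹ * m ≤ m⁻¹ * x i :=
        mul_le_mul_of_nonneg_left (hi0 i) (inv_pos.mpr hmpos).le
      simpa [hu, inv_mul_cancel₀ hmpos.ne'] using this
  have hxu : x = m • u := by
    funext i
    simp [hu, ← mul_assoc, mul_inv_cancel₀ hmpos.ne']
  have h1 : V₁ x = m ^ (-α) * V₁ u := by rw [hxu]; exact hhom₁ m hmpos u hupos
  have h2 : V₂ x = m ^ (-α) * V₂ u := by rw [hxu]; exact hhom₂ m hmpos u hupos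
  have ht : (0:ℝ) < m ^ (-α) := Real.rpow_pos_of_pos hmpos _
  have ha := hlb₁ u hupos huinf
  have hb := hlb₂ u hupos huinf
  have hCu := hC u hupos huinf
  have hbound := exp_diff_bound ht ha hb
  have hinv : Real.exp (-1) = 1 / Real.exp 1 := by
    rw [Real.exp_neg, one_div]
  calc |Real.exp (-V₁ x) - Real.exp (-V₂ x)|
      = |Real.exp (-(m ^ (-α) * V₁ u)) - Real.exp (-(m ^ (-α) * V₂ u))| := by
        rw [h1, h2]
    _ ≤ Real.exp (-1) * |V₁ u - V₂ u| := hbound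
    _ ≤ Real.exp (-1) * C := by
        apply mul_le_mul_of_nonneg_left hCu (Real.exp_nonneg _)
    _ = (1 / Real.exp 1) * C := by rw [hinv]
end

section
/- Let d ≥ 1, α > 0, and let H₁, H₂ be finite Borel measures on ℝ^d concentrated on the positive ℓ_α-unit sphere S = { s ∈ [0,∞)^d : Σ_{i=1}^d s_i^α = 1 }, satisfying ∫_S s_i^α H_k(ds) = 1 for every 1 ≤ i ≤ d and k = 1,2. Define V_k(x) = ∫_S max_{1≤j≤d} (s_j/x_j)^α H_k(ds) for x ∈ (0,∞)^d and F_k = exp(−V_k). Then sup_{x ∈ (0,∞)^d} |F₁(x) − F₂(x)| ≤ (1/e) · sup_{A Borel} |H₁(A) − H₂(A)|. -/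
set_option maxHeartbeats 1000000


open MeasureTheory

lemma aux_exp_diff (a b m : ℝ) (ha : m ≤ a) (hb : m ≤ b) :
    |Real.exp (-a) - Real.exp (-b)| ≤ Real.exp (-m) * |a - b| := by
  wlog h : b ≤ a generalizing a b
  · rw [abs_sub_comm, abs_sub_comm a b]; exact this b a hb ha (le_of_not_ge h)
  have h1 : Real.exp (-a) ≤ Real.exp (-b) := Real.exp_le_exp.mpr (by linarith)
  rw [abs_of_nonpos (by linarith), abs_of_nonneg (by linarith)]
  have h2 : (b - a) + 1 ≤ Real.exp (b - a) := Real.add_one_le_exp _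
  have h3 : Real.exp (-b) * Real.exp (b - a) = Real.exp (-a) := by
    rw [← Real.exp_add]; ring_nf
  have h4 : Real.exp (-b) ≤ Real.exp (-m) := Real.exp_le_exp.mpr (by linarith)
  have h5 : (0:ℝ) < Real.exp (-b) := Real.exp_pos _
  nlinarith [mul_le_mul_of_nonneg_left h2 h5.le]

lemma aux_texp (m : ℝ) : Real.exp (-m) * m ≤ 1 / Real.exp 1 := by
  have h1 : m ≤ Real.exp (m - 1) := by linarith [Real.add_one_le_exp (m - 1)]
  have h2 : Real.exp (m - 1) * Real.exp 1 = Real.exp m := by rw [← Real.exp_add]; ring_nf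
  have h3 : Real.exp (-m) * Real.exp m = 1 := by rw [← Real.exp_add]; simp
  have h4 : (0:ℝ) < Real.exp (-m) := Real.exp_pos _
  have h5 : (0:ℝ) < Real.exp 1 := Real.exp_pos _
  rw [le_div_iff₀ h5]
  nlinarith [mul_le_mul_of_nonneg_left h1 h4.le]

/-- Total variation bound of Theorem 3.1 on the positive ℓ_α-unit sphere
(where the constant `M_α` equals 1): `d_K(F₁, F₂) ≤ (1/e) · ‖H₁ − H₂‖_TV`. -/
theorem kolmogorov_le_tv_alpha_sphere
    (d : ℕ) (hd : 0 < d) (α : ℝ) (hα : 0 < α)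
    (H₁ H₂ : Measure (Fin d → ℝ))
    [IsFiniteMeasure H₁] [IsFiniteMeasure H₂]
    (S : Set (Fin d → ℝ))
    (hS : S = {s : Fin d → ℝ | (∀ i, 0 ≤ s i) ∧ (∑ i, s i ^ α) = 1})
    (hc₁ : H₁ Sᶜ = 0) (hc₂ : H₂ Sᶜ = 0)
    (hmom₁ : ∀ i, ∫ s in S, s i ^ α ∂H₁ = 1)
    (hmom₂ : ∀ i, ∫ s in S, s i ^ α ∂H₂ = 1) :
    ∀ x : Fin d → ℝ, (∀ i, 0 < x i) →
      |Real.exp (-(∫ s in S, ⨆ j, (s j / x j) ^ α ∂H₁)) -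
        Real.exp (-(∫ s in S, ⨆ j, (s j / x j) ^ α ∂H₂))| ≤
      (1 / Real.exp 1) *
        sSup {r : ℝ | ∃ A : Set (Fin d → ℝ), MeasurableSet A ∧
          r = |(H₁ A).toReal - (H₂ A).toReal|} := by
  intro x hx
  have hne : Nonempty (Fin d) := ⟨⟨0, hd⟩⟩
  set f : (Fin d → ℝ) → ℝ := fun s => ⨆ j, (s j / x j) ^ α with hfdef
  set m : ℝ := ⨆ j, (1 / x j) ^ α with hmdef
  have hbddr : ∀ g : Fin d → ℝ, BddAbove (Set.range g) :=
    fun g => Set.Finite.bddAbove (Set.finite_range g)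
  -- measurability of S
  have hmeas_pow : ∀ i : Fin d, Measurable fun s : Fin d → ℝ => s i ^ α :=
    fun i => (Real.continuous_rpow_const hα.le).measurable.comp (measurable_pi_apply i)
  have hSm : MeasurableSet S := by
    rw [hS, Set.setOf_and]
    refine MeasurableSet.inter ?_ ?_
    · rw [Set.setOf_forall]
      exact MeasurableSet.iInter fun i =>
        measurableSet_le measurable_const (measurable_pi_apply i)
    · exact (Finset.measurable_sum Finset.univ fun i _ => hmeas_pow i)
        (measurableSet_singleton 1)
  -- measurability of f
  have hfm : Measurable f := by
    have h1 : f = fun s => Finset.univ.sup' Finset.univ_nonempty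
        (fun j => (s j / x j) ^ α) := by
      funext s; rw [Finset.sup'_univ_eq_ciSup]
    rw [h1]
    have h2 := Finset.measurable_sup' (f := fun (j : Fin d) (s : Fin d → ℝ) => (s j / x j) ^ α)
      (Finset.univ_nonempty) (fun j _ =>
        (Real.continuous_rpow_const hα.le).measurable.comp
          (by fun_prop : Measurable fun s : Fin d → ℝ => s j / x j))
    convert h2 using 2 with s
    rw [Finset.sup'_apply]
  -- bounds on S
  have hsj_le_one : ∀ s ∈ S, ∀ j, s j ^ α ≤ 1 := by
    intro s hs j
    rw [hS] at hs
    obtain ⟨hs0, hs1⟩ := hs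
    calc s j ^ α ≤ ∑ i, s i ^ α :=
          Finset.single_le_sum (fun i _ => Real.rpow_nonneg (hs0 i) α) (Finset.mem_univ j)
      _ = 1 := hs1
  have hterm_le : ∀ s ∈ S, ∀ j, (s j / x j) ^ α ≤ (1 / x j) ^ α := by
    intro s hs j
    have h1 := hsj_le_one s hs j
    rw [hS] at hs
    obtain ⟨hs0, _⟩ := hs
    have hxj := (hx j).le
    rw [Real.div_rpow (hs0 j) hxj, Real.div_rpow zero_le_one hxj, Real.one_rpow]
    exact (div_le_div_iff_of_pos_right (Real.rpow_pos_of_pos (hx j) α)).mpr h1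
  have hterm_nonneg : ∀ s ∈ S, ∀ j, 0 ≤ (s j / x j) ^ α := by
    intro s hs j
    rw [hS] at hs
    exact Real.rpow_nonneg (div_nonneg (hs.1 j) (hx j).le) α
  have hf_le : ∀ s ∈ S, f s ≤ m := by
    intro s hs
    refine ciSup_le fun j => le_trans (hterm_le s hs j)
      (le_ciSup (f := fun j => (1 / x j) ^ α) (hbddr _) j)
  have hf_nonneg : ∀ s ∈ S, 0 ≤ f s := by
    intro s hs
    exact le_trans (hterm_nonneg s hs ⟨0, hd⟩)
      (le_ciSup (f := fun j => (s j / x j) ^ α) (hbddr _) ⟨0, hd⟩)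
  have hmpos : 0 < m := by
    refine lt_of_lt_of_le (Real.rpow_pos_of_pos (one_div_pos.mpr (hx ⟨0, hd⟩)) α)
      (le_ciSup (f := fun j => (1 / x j) ^ α) (hbddr _) ⟨0, hd⟩)
  -- integrability and lower bound on V for a generic finite measure
  have key : ∀ (H : Measure (Fin d → ℝ)) [IsFiniteMeasure H],
      (∀ i, ∫ s in S, s i ^ α ∂H = 1) →
      Integrable f (H.restrict S) ∧ m ≤ ∫ s in S, f s ∂H := by
    intro H _ hmom
    have haeS : ∀ᵐ s ∂(H.restrict S), s ∈ S := ae_restrict_mem hSm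
    have hint : Integrable f (H.restrict S) := by
      refine ⟨hfm.aestronglyMeasurable, HasFiniteIntegral.of_bounded (C := m) ?_⟩
      filter_upwards [haeS] with s hs
      rw [Real.norm_eq_abs, abs_of_nonneg (hf_nonneg s hs)]
      exact hf_le s hs
    refine ⟨hint, ciSup_le fun j => ?_⟩
    have hintj : Integrable (fun s => (s j / x j) ^ α) (H.restrict S) := by
      refine ⟨((Real.continuous_rpow_const hα.le).measurable.comp
        (by fun_prop : Measurable fun s : Fin d → ℝ => s j / x j)).aestronglyMeasurable,
        HasFiniteIntegral.of_bounded (C := m) ?_⟩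
      filter_upwards [haeS] with s hs
      rw [Real.norm_eq_abs, abs_of_nonneg (hterm_nonneg s hs j)]
      exact le_trans (hterm_le s hs j)
        (le_ciSup (f := fun j => (1 / x j) ^ α) (hbddr _) j)
    have hij : ∫ s in S, (s j / x j) ^ α ∂H = (1 / x j) ^ α := by
      have : ∫ s in S, (s j / x j) ^ α ∂H = ∫ s in S, s j ^ α * (x j ^ α)⁻¹ ∂H := by
        refine integral_congr_ae ?_
        filter_upwards [haeS] with s hs
        rw [hS] at hs
        rw [Real.div_rpow (hs.1 j) (hx j).le, div_eq_mul_inv]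
      rw [this, integral_mul_const, hmom j, one_mul,
        Real.div_rpow zero_le_one (hx j).le, Real.one_rpow, div_eq_mul_inv, one_mul]
    rw [← hij]
    refine integral_mono_ae hintj hint ?_
    filter_upwards [haeS] with s _
    exact le_ciSup (f := fun j => (s j / x j) ^ α) (hbddr _) j
  obtain ⟨hint₁, hV₁⟩ := key H₁ hmom₁
  obtain ⟨hint₂, hV₂⟩ := key H₂ hmom₂
  set V₁ := ∫ s in S, f s ∂H₁ with hV₁def
  set V₂ := ∫ s in S, f s ∂H₂ with hV₂def
  set T := sSup {r : ℝ | ∃ A : Set (Fin d → ℝ), MeasurableSet A ∧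
      r = |(H₁ A).toReal - (H₂ A).toReal|} with hTdef
  have hbddT : BddAbove {r : ℝ | ∃ A : Set (Fin d → ℝ), MeasurableSet A ∧
      r = |(H₁ A).toReal - (H₂ A).toReal|} := by
    refine ⟨(H₁ Set.univ).toReal + (H₂ Set.univ).toReal, ?_⟩
    rintro r ⟨A, _, rfl⟩
    have h1 : (H₁ A).toReal ≤ (H₁ Set.univ).toReal :=
      ENNReal.toReal_mono (measure_ne_top _ _) (measure_mono (Set.subset_univ A))
    have h2 : (H₂ A).toReal ≤ (H₂ Set.univ).toReal :=
      ENNReal.toReal_mono (measure_ne_top _ _) (measure_mono (Set.subset_univ A))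
    have h3 : (0:ℝ) ≤ (H₁ A).toReal := ENNReal.toReal_nonneg
    have h4 : (0:ℝ) ≤ (H₂ A).toReal := ENNReal.toReal_nonneg
    rw [abs_le]
    constructor <;> linarith
  have hT0 : 0 ≤ T :=
    le_csSup hbddT ⟨∅, MeasurableSet.empty, by simp⟩
  -- pointwise TV bound for the layercake functions
  have hgkey : ∀ t : ℝ,
      |((H₁.restrict S) {a | t ≤ f a}).toReal - ((H₂.restrict S) {a | t ≤ f a}).toReal| ≤ T := by
    intro t
    have hA : MeasurableSet {a : Fin d → ℝ | t ≤ f a} := hfm measurableSet_Ici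
    rw [Measure.restrict_apply hA, Measure.restrict_apply hA]
    exact le_csSup hbddT ⟨{a | t ≤ f a} ∩ S, hA.inter hSm, rfl⟩
  -- layer cake representation
  have hlc : ∀ (H : Measure (Fin d → ℝ)) [IsFiniteMeasure H], Integrable f (H.restrict S) →
      ∫ s in S, f s ∂H = ∫ t in Set.Ioc 0 m,
        ((H.restrict S) {a | t ≤ f a}).toReal := by
    intro H _ hint
    refine hint.integral_eq_integral_Ioc_meas_le ?_ ?_
    · filter_upwards [ae_restrict_mem hSm] with s hs using hf_nonneg s hs
    · filter_upwards [ae_restrict_mem hSm] with s hs using hf_le s hs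
  -- integrability of the layercake functions
  have hgint : ∀ (H : Measure (Fin d → ℝ)) [IsFiniteMeasure H],
      IntegrableOn (fun t => ((H.restrict S) {a | t ≤ f a}).toReal) (Set.Ioc 0 m) := by
    intro H _
    have hanti : Antitone fun t : ℝ => (H.restrict S) {a | t ≤ f a} :=
      fun t t' h => measure_mono fun a ha => le_trans h ha
    have hmeas : Measurable fun t : ℝ => ((H.restrict S) {a | t ≤ f a}).toReal :=
      Measurable.ennreal_toReal hanti.measurable
    refine ⟨hmeas.aestronglyMeasurable, ?_⟩
    refine HasFiniteIntegral.restrict_of_bounded (C := (H Set.univ).toReal)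
      measure_Ioc_lt_top ?_
    refine Filter.Eventually.of_forall fun t => ?_
    rw [Real.norm_eq_abs, abs_of_nonneg ENNReal.toReal_nonneg]
    refine ENNReal.toReal_mono (measure_ne_top _ _) ?_
    exact le_trans (Measure.restrict_apply_le _ _) (measure_mono (Set.subset_univ _))
  have hg1 := hgint H₁
  have hg2 := hgint H₂
  have hVdiff : V₁ - V₂ = ∫ t in Set.Ioc 0 m,
      (((H₁.restrict S) {a | t ≤ f a}).toReal - ((H₂.restrict S) {a | t ≤ f a}).toReal) := by
    rw [hV₁def, hV₂def, hlc H₁ hint₁, hlc H₂ hint₂, ← integral_sub hg1 hg2]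
  have habs : |V₁ - V₂| ≤ T * m := by
    rw [hVdiff]
    have hb := norm_setIntegral_le_of_norm_le_const (μ := volume) (s := Set.Ioc 0 m)
      (f := fun t => (((H₁.restrict S) {a | t ≤ f a}).toReal -
        ((H₂.restrict S) {a | t ≤ f a}).toReal))
      (C := T) measure_Ioc_lt_top
      (fun t _ => by rw [Real.norm_eq_abs]; exact hgkey t)
    rw [Real.norm_eq_abs] at hb
    calc _ ≤ T * (volume (Set.Ioc (0:ℝ) m)).toReal := hb
      _ = T * m := by rw [Real.volume_Ioc, sub_zero, ENNReal.toReal_ofReal hmpos.le]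
  calc |Real.exp (-V₁) - Real.exp (-V₂)|
      ≤ Real.exp (-m) * |V₁ - V₂| := aux_exp_diff _ _ _ hV₁ hV₂
    _ ≤ Real.exp (-m) * (T * m) :=
        mul_le_mul_of_nonneg_left habs (Real.exp_pos _).le
    _ = (Real.exp (-m) * m) * T := by ring
    _ ≤ (1 / Real.exp 1) * T := mul_le_mul_of_nonneg_right (aux_texp m) hT0
end

section
/- Let d ≥ 1, α > 0, let ‖·‖ be a norm on ℝ^d, and let H₁, H₂ be finite Borel measures on ℝ^d concentrated on the positive unit sphere S = { s ∈ [0,∞)^d : ‖s‖ = 1 }, satisfying ∫_S s_i^α H_k(ds) = 1 for every 1 ≤ i ≤ d and k = 1,2. Define V_k(x) = ∫_S max_{1≤j≤d} (s_j/x_j)^α H_k(ds) for x ∈ (0,∞)^d, F_k = exp(−V_k), and M_α = sup { Σ_{i=1}^d u_i^α : u ∈ [0,∞)^d, ‖u‖ = 1 }. Then sup_{x ∈ (0,∞)^d} |F₁(x) − F₂(x)| ≤ (M_α/e) · sup_{A Borel} |H₁(A) − H₂(A)|. -/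
open MeasureTheory

/-! ### Auxiliary lemmas -/

lemma aux_mul_exp_neg_le (m : ℝ) : m * Real.exp (-m) ≤ Real.exp (-1) := by
  have h := Real.add_one_le_exp (m - 1)
  have h2 : m ≤ Real.exp (m - 1) := by linarith
  calc m * Real.exp (-m) ≤ Real.exp (m - 1) * Real.exp (-m) :=
        mul_le_mul_of_nonneg_right h2 (Real.exp_pos _).le
    _ = Real.exp (-1) := by rw [← Real.exp_add]; ring_nf

lemma aux_integral_diff_le {X : Type*} [MeasurableSpace X]
    (μ₁ μ₂ : Measure X) [IsFiniteMeasure μ₁] [IsFiniteMeasure μ₂]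
    {g : X → ℝ} (hg : Measurable g) {B : ℝ} (hB : 0 ≤ B)
    (h₁ : ∀ᵐ x ∂μ₁, 0 ≤ g x ∧ g x ≤ B)
    (h₂ : ∀ᵐ x ∂μ₂, 0 ≤ g x ∧ g x ≤ B)
    {T : ℝ} (hT : ∀ A : Set X, MeasurableSet A → (μ₁ A).toReal - (μ₂ A).toReal ≤ T) :
    ∫ x, g x ∂μ₁ - ∫ x, g x ∂μ₂ ≤ B * T := by
  set ν : Measure X := μ₁ + μ₂ with hν
  have hac₁ : μ₁ ≪ ν := Measure.absolutelyContinuous_of_le (Measure.le_add_right le_rfl)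
  have hac₂ : μ₂ ≪ ν := Measure.absolutelyContinuous_of_le (Measure.le_add_left le_rfl)
  set f₁ := μ₁.rnDeriv ν with hf₁
  set f₂ := μ₂.rnDeriv ν with hf₂
  set P : Set X := {x | f₂ x ≤ f₁ x} with hPdef
  have hP : MeasurableSet P :=
    measurableSet_le (Measure.measurable_rnDeriv _ _) (Measure.measurable_rnDeriv _ _)
  have hPle : μ₂.restrict P ≤ μ₁.restrict P := by
    refine Measure.le_iff.2 fun A hA => ?_
    rw [Measure.restrict_apply hA, Measure.restrict_apply hA]
    calc μ₂ (A ∩ P) = ∫⁻ x in A ∩ P, f₂ x ∂ν :=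
          (Measure.setLIntegral_rnDeriv' hac₂ (hA.inter hP)).symm
      _ ≤ ∫⁻ x in A ∩ P, f₁ x ∂ν :=
          setLIntegral_mono (Measure.measurable_rnDeriv _ _) fun x hx => hx.2
      _ = μ₁ (A ∩ P) := Measure.setLIntegral_rnDeriv' hac₁ (hA.inter hP)
  have hPcle : μ₁.restrict Pᶜ ≤ μ₂.restrict Pᶜ := by
    refine Measure.le_iff.2 fun A hA => ?_
    rw [Measure.restrict_apply hA, Measure.restrict_apply hA]
    calc μ₁ (A ∩ Pᶜ) = ∫⁻ x in A ∩ Pᶜ, f₁ x ∂ν :=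
          (Measure.setLIntegral_rnDeriv' hac₁ (hA.inter hP.compl)).symm
      _ ≤ ∫⁻ x in A ∩ Pᶜ, f₂ x ∂ν :=
          setLIntegral_mono (Measure.measurable_rnDeriv _ _)
            (fun x hx => le_of_not_ge hx.2)
      _ = μ₂ (A ∩ Pᶜ) := Measure.setLIntegral_rnDeriv' hac₂ (hA.inter hP.compl)
  have hint₁ : Integrable g μ₁ := by
    refine (integrable_const B).mono' hg.aestronglyMeasurable ?_
    filter_upwards [h₁] with x hx
    rw [Real.norm_eq_abs, abs_of_nonneg hx.1]; exact hx.2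
  have hint₂ : Integrable g μ₂ := by
    refine (integrable_const B).mono' hg.aestronglyMeasurable ?_
    filter_upwards [h₂] with x hx
    rw [Real.norm_eq_abs, abs_of_nonneg hx.1]; exact hx.2
  set δ : Measure X := μ₁.restrict P - μ₂.restrict P with hδdef
  have hδle : δ ≤ μ₁.restrict P := Measure.sub_le
  have hcancel : δ + μ₂.restrict P = μ₁.restrict P := Measure.sub_add_cancel_of_le hPle
  have hintδ : Integrable g δ := (hint₁.restrict (s := P)).mono_measure hδle
  have split₁ : ∫ x, g x ∂μ₁ = (∫ x in P, g x ∂μ₁) + ∫ x in Pᶜ, g x ∂μ₁ :=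
    (integral_add_compl hP hint₁).symm
  have split₂ : ∫ x, g x ∂μ₂ = (∫ x in P, g x ∂μ₂) + ∫ x in Pᶜ, g x ∂μ₂ :=
    (integral_add_compl hP hint₂).symm
  have step : ∫ x in P, g x ∂μ₁ = (∫ x, g x ∂δ) + ∫ x in P, g x ∂μ₂ := by
    conv_lhs => rw [← hcancel]
    exact integral_add_measure hintδ (hint₂.restrict (s := P))
  have hδuniv : (δ Set.univ).toReal ≤ T := by
    rw [hδdef, Measure.sub_apply MeasurableSet.univ hPle, Measure.restrict_apply_univ,
      Measure.restrict_apply_univ,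
      ENNReal.toReal_sub_of_le (by simpa using Measure.le_iff.1 hPle Set.univ MeasurableSet.univ)
        (measure_ne_top _ _)]
    exact hT P hP
  have hgδ : ∫ x, g x ∂δ ≤ B * T := by
    have hac : δ ≪ μ₁.restrict P := Measure.absolutelyContinuous_of_le hδle
    have hbound : ∀ᵐ x ∂δ, g x ≤ B := by
      have h1P : ∀ᵐ x ∂(μ₁.restrict P), g x ≤ B :=
        ae_restrict_of_ae (h₁.mono fun x hx => hx.2)
      exact hac.ae_le h1P
    calc ∫ x, g x ∂δ ≤ ∫ _, B ∂δ := integral_mono_ae hintδ (integrable_const B) hbound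
      _ = (δ Set.univ).toReal * B := by rw [integral_const]; simp [smul_eq_mul, Measure.real_def]
      _ ≤ T * B := mul_le_mul_of_nonneg_right hδuniv hB
      _ = B * T := mul_comm _ _
  have hPc : ∫ x in Pᶜ, g x ∂μ₁ ≤ ∫ x in Pᶜ, g x ∂μ₂ := by
    refine integral_mono_measure hPcle ?_ (hint₂.restrict (s := Pᶜ))
    exact ae_restrict_of_ae (h₂.mono fun x hx => hx.1)
  linarith [split₁, split₂, step, hgδ, hPc]

lemma aux_norm_lower (d : ℕ) (hd : 0 < d) (N : (Fin d → ℝ) → ℝ)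
    (hN0 : ∀ x, N x = 0 ↔ x = 0)
    (hNsmul : ∀ (c : ℝ) (x : Fin d → ℝ), N (c • x) = |c| * N x)
    (hNadd : ∀ x y : Fin d → ℝ, N (x + y) ≤ N x + N y) :
    Continuous N ∧ ∃ c : ℝ, 0 < c ∧ ∀ u : Fin d → ℝ, c * ‖u‖ ≤ N u := by
  haveI : Nonempty (Fin d) := ⟨⟨0, hd⟩⟩
  have hzero : N 0 = 0 := (hN0 0).2 rfl
  have hneg : ∀ y, N (-y) = N y := by
    intro y
    have := hNsmul (-1) y
    simpa using this
  have hnonneg : ∀ y, 0 ≤ N y := by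
    intro y
    have h1 : N (y + -y) ≤ N y + N (-y) := hNadd y (-y)
    rw [add_neg_cancel, hzero, hneg] at h1
    linarith
  set C : ℝ := ∑ i : Fin d, N (Pi.single i 1) with hC
  have hCn : 0 ≤ C := Finset.sum_nonneg fun i _ => hnonneg _
  have hsum_le : ∀ (s : Finset (Fin d)) (f : Fin d → (Fin d → ℝ)),
      N (∑ i ∈ s, f i) ≤ ∑ i ∈ s, N (f i) := by
    intro s f
    induction s using Finset.induction with
    | empty => simp [hzero]
    | insert a s hnotmem ih =>
        rw [Finset.sum_insert hnotmem, Finset.sum_insert hnotmem]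
        exact (hNadd _ _).trans (by linarith)
  have hupper : ∀ z : Fin d → ℝ, N z ≤ C * ‖z‖ := by
    intro z
    have hdecomp : z = ∑ i : Fin d, (z i) • (Pi.single i (1:ℝ) : Fin d → ℝ) := by
      ext j
      rw [Finset.sum_apply]
      simp [Pi.single_apply, Finset.sum_ite_eq']
    calc N z = N (∑ i : Fin d, (z i) • (Pi.single i (1:ℝ) : Fin d → ℝ)) := by rw [← hdecomp]
      _ ≤ ∑ i : Fin d, N ((z i) • (Pi.single i (1:ℝ) : Fin d → ℝ)) := hsum_le _ _
      _ = ∑ i : Fin d, |z i| * N (Pi.single i 1) := by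
          refine Finset.sum_congr rfl fun i _ => hNsmul _ _
      _ ≤ ∑ i : Fin d, ‖z‖ * N (Pi.single i 1) := by
          refine Finset.sum_le_sum fun i _ => ?_
          exact mul_le_mul_of_nonneg_right
            ((Real.norm_eq_abs (z i)) ▸ norm_le_pi_norm z i) (hnonneg _)
      _ = C * ‖z‖ := by rw [← Finset.mul_sum, mul_comm]
  have hlip : ∀ a b : Fin d → ℝ, |N a - N b| ≤ C * ‖a - b‖ := by
    intro a b
    have h1 : N a ≤ N b + N (a - b) := by
      have := hNadd b (a - b); simpa using this
    have h2 : N b ≤ N a + N (a - b) := by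
      have := hNadd a (b - a)
      have hnb : N (b - a) = N (a - b) := by rw [← hneg (b - a)]; congr 1; abel
      rw [hnb] at this
      simpa using this
    have h3 := hupper (a - b)
    rw [abs_le]; constructor <;> linarith
  have hcont : Continuous N := by
    refine (LipschitzWith.of_dist_le_mul (K := C.toNNReal) fun a b => ?_).continuous
    rw [Real.dist_eq, dist_eq_norm]
    exact (hlip a b).trans (mul_le_mul_of_nonneg_right (Real.le_coe_toNNReal C) (norm_nonneg _))
  refine ⟨hcont, ?_⟩
  haveI : Nontrivial (Fin d → ℝ) := Function.nontrivial
  have hsne : (Metric.sphere (0 : Fin d → ℝ) 1).Nonempty :=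
    NormedSpace.sphere_nonempty.2 zero_le_one
  obtain ⟨y₀, hy₀mem, hy₀min⟩ :=
    (isCompact_sphere (0 : Fin d → ℝ) 1).exists_isMinOn hsne hcont.continuousOn
  have hy₀norm : ‖y₀‖ = 1 := by simpa using hy₀mem
  have hy₀ne : y₀ ≠ 0 := by
    intro h; rw [h] at hy₀norm; simp at hy₀norm
  refine ⟨N y₀, (hnonneg y₀).lt_of_ne' (fun h => hy₀ne ((hN0 y₀).1 h)), fun u => ?_⟩
  rcases eq_or_ne u 0 with rfl | hu
  · simp [hzero]
  · have hun : ‖u‖ ≠ 0 := norm_ne_zero_iff.2 hu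
    have hw : (‖u‖⁻¹ • u) ∈ Metric.sphere (0 : Fin d → ℝ) 1 := by
      simp [norm_smul, abs_of_nonneg (inv_nonneg.2 (norm_nonneg u)), inv_mul_cancel₀ hun]
    have h1 : N y₀ ≤ N (‖u‖⁻¹ • u) := hy₀min hw
    have h2 : N u = ‖u‖ * N (‖u‖⁻¹ • u) := by
      have h3 := hNsmul ‖u‖ (‖u‖⁻¹ • u)
      rw [smul_smul, mul_inv_cancel₀ hun, one_smul, abs_of_nonneg (norm_nonneg u)] at h3
      exact h3
    calc N y₀ * ‖u‖ ≤ N (‖u‖⁻¹ • u) * ‖u‖ := mul_le_mul_of_nonneg_right h1 (norm_nonneg _)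
      _ = N u := by rw [h2, mul_comm]

lemma aux_measurable_sup' {X ι : Type*} [MeasurableSpace X] (s : Finset ι) (hs : s.Nonempty)
    (f : ι → X → ℝ) (hf : ∀ i, Measurable (f i)) :
    Measurable fun x => s.sup' hs fun i => f i x := by
  induction hs using Finset.Nonempty.cons_induction with
  | singleton a => simpa using hf a
  | cons a s ha hs ih =>
      have : (fun x => (Finset.cons a s ha).sup' (Finset.cons_nonempty ha) fun i => f i x)
          = fun x => (f a x) ⊔ (s.sup' hs fun i => f i x) := by
        funext x; rw [Finset.sup'_cons]
      rw [this]
      exact (hf a).max ih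

/-- Total variation bound of Theorem 3.1 for a general reference norm `N` on ℝ^d:
`d_K(F₁, F₂) ≤ (M_α/e) · ‖H₁ − H₂‖_TV`, where
`M_α = sup { Σ_i u_i^α : u ≥ 0, N u = 1 }`. -/
theorem kolmogorov_le_tv_general_norm
    (d : ℕ) (hd : 0 < d) (α : ℝ) (hα : 0 < α)
    (N : (Fin d → ℝ) → ℝ)
    (hN0 : ∀ x, N x = 0 ↔ x = 0)
    (hNsmul : ∀ (c : ℝ) (x : Fin d → ℝ), N (c • x) = |c| * N x)
    (hNadd : ∀ x y : Fin d → ℝ, N (x + y) ≤ N x + N y)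
    (H₁ H₂ : Measure (Fin d → ℝ))
    [IsFiniteMeasure H₁] [IsFiniteMeasure H₂]
    (S : Set (Fin d → ℝ))
    (hS : S = {s : Fin d → ℝ | (∀ i, 0 ≤ s i) ∧ N s = 1})
    (hc₁ : H₁ Sᶜ = 0) (hc₂ : H₂ Sᶜ = 0)
    (hmom₁ : ∀ i, ∫ s in S, s i ^ α ∂H₁ = 1)
    (hmom₂ : ∀ i, ∫ s in S, s i ^ α ∂H₂ = 1)
    (Mα : ℝ)
    (hMα : Mα = sSup {r : ℝ | ∃ u : Fin d → ℝ, (∀ i, 0 ≤ u i) ∧ N u = 1 ∧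
      r = ∑ i, u i ^ α}) :
    ∀ x : Fin d → ℝ, (∀ i, 0 < x i) →
      |Real.exp (-(∫ s in S, ⨆ j, (s j / x j) ^ α ∂H₁)) -
        Real.exp (-(∫ s in S, ⨆ j, (s j / x j) ^ α ∂H₂))| ≤
      (Mα / Real.exp 1) *
        sSup {r : ℝ | ∃ A : Set (Fin d → ℝ), MeasurableSet A ∧
          r = |(H₁ A).toReal - (H₂ A).toReal|} := by
  intro x hx
  haveI : Nonempty (Fin d) := ⟨⟨0, hd⟩⟩
  obtain ⟨hNcont, c, hc0, hcle⟩ := aux_norm_lower d hd N hN0 hNsmul hNadd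
  -- S is measurable
  have hSmeas : MeasurableSet S := by
    rw [hS]
    have : {s : Fin d → ℝ | (∀ i, 0 ≤ s i) ∧ N s = 1}
        = (⋂ i, {s : Fin d → ℝ | 0 ≤ s i}) ∩ N ⁻¹' {1} := by
      ext s; simp [Set.mem_iInter]
    rw [this]
    exact (MeasurableSet.iInter fun i =>
      measurableSet_le measurable_const (measurable_pi_apply i)).inter
      (hNcont.measurable (measurableSet_singleton 1))
  -- minimal coordinate of x
  obtain ⟨j₀, -, hj₀⟩ :=
    Finset.exists_min_image (Finset.univ : Finset (Fin d)) x ⟨⟨0, hd⟩, Finset.mem_univ _⟩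
  set m : ℝ := (1 / x j₀) ^ α with hm
  have hxj₀ : 0 < x j₀ := hx j₀
  have hm0 : 0 < m := Real.rpow_pos_of_pos (by positivity) α
  -- the Mα set
  set MS : Set ℝ := {r : ℝ | ∃ u : Fin d → ℝ, (∀ i, 0 ≤ u i) ∧ N u = 1 ∧
      r = ∑ i, u i ^ α} with hMS
  have hMSbdd : BddAbove MS := by
    refine ⟨(d : ℝ) * (1 / c) ^ α, fun r hr => ?_⟩
    obtain ⟨u, hu0, hu1, rfl⟩ := hr
    have hub : ∀ i, u i ≤ 1 / c := by
      intro i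
      have h1 : c * ‖u‖ ≤ 1 := by rw [← hu1]; exact hcle u
      have h2 : ‖u‖ ≤ 1 / c := by
        rw [le_div_iff₀ hc0]; linarith [h1]
      calc u i ≤ |u i| := le_abs_self _
        _ ≤ ‖u‖ := (Real.norm_eq_abs (u i)) ▸ norm_le_pi_norm u i
        _ ≤ 1 / c := h2
    calc ∑ i, u i ^ α ≤ ∑ _i : Fin d, (1 / c) ^ α :=
          Finset.sum_le_sum fun i _ => Real.rpow_le_rpow (hu0 i) (hub i) hα.le
      _ = (d : ℝ) * (1 / c) ^ α := by simp [Finset.sum_const, mul_comm]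
  -- an element of MS built from the single at j₀
  have hsingle_pos : 0 < N (Pi.single j₀ 1) := by
    have h1 : c * ‖(Pi.single j₀ 1 : Fin d → ℝ)‖ ≤ N (Pi.single j₀ 1) := hcle _
    have h2 : (Pi.single j₀ 1 : Fin d → ℝ) ≠ 0 := by
      intro h
      have := congrFun h j₀
      simp at this
    have h3 : 0 < ‖(Pi.single j₀ 1 : Fin d → ℝ)‖ := norm_pos_iff.2 h2
    nlinarith
  set u₀ : Fin d → ℝ := (N (Pi.single j₀ 1))⁻¹ • (Pi.single j₀ (1:ℝ) : Fin d → ℝ) with hu₀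
  have hu₀0 : ∀ i, 0 ≤ u₀ i := by
    intro i
    rw [hu₀]
    simp only [Pi.smul_apply, smul_eq_mul]
    by_cases h : i = j₀
    · subst h; simp [Pi.single_apply, (inv_nonneg.2 hsingle_pos.le)]
    · simp [Pi.single_apply, h]
  have hu₀1 : N u₀ = 1 := by
    rw [hu₀, hNsmul, abs_of_nonneg (inv_nonneg.2 hsingle_pos.le),
      inv_mul_cancel₀ hsingle_pos.ne']
  have hMα_ge : ∀ u : Fin d → ℝ, (∀ i, 0 ≤ u i) → N u = 1 → ∑ i, u i ^ α ≤ Mα := by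
    intro u h1 h2
    rw [hMα]
    exact le_csSup hMSbdd ⟨u, h1, h2, rfl⟩
  have hMα0 : 0 ≤ Mα := by
    refine le_trans ?_ (hMα_ge u₀ hu₀0 hu₀1)
    exact Finset.sum_nonneg fun i _ => Real.rpow_nonneg (hu₀0 i) α
  -- the integrand g
  set g : (Fin d → ℝ) → ℝ := fun s => ⨆ j, (s j / x j) ^ α with hgdef
  have hg_eq : g = fun s => Finset.univ.sup' Finset.univ_nonempty
      (fun j => (s j / x j) ^ α) := by
    funext s
    exact (Finset.sup'_univ_eq_ciSup _).symm
  have hgmeas : Measurable g := by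
    rw [hg_eq]
    refine aux_measurable_sup' _ _ _ fun j => ?_
    have h1 : Measurable fun s : Fin d → ℝ => s j / x j :=
      by fun_prop
    exact (Real.continuous_rpow_const hα.le).measurable.comp h1
  set B : ℝ := m * Mα with hB
  have hBnn : 0 ≤ B := mul_nonneg hm0.le hMα0
  -- bounds for g on S
  have hterm_le_m : ∀ s : Fin d → ℝ, (∀ i, 0 ≤ s i) → ∀ j, (s j / x j) ^ α ≤ s j ^ α * m := by
    intro s hs0 j
    have hd1 : s j / x j ≤ s j / x j₀ :=
      div_le_div_of_nonneg_left (hs0 j) hxj₀ (hj₀ j (Finset.mem_univ j))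
    have hd0 : 0 ≤ s j / x j := div_nonneg (hs0 j) (hx j).le
    calc (s j / x j) ^ α ≤ (s j / x j₀) ^ α := Real.rpow_le_rpow hd0 hd1 hα.le
      _ = (s j * (1 / x j₀)) ^ α := by rw [div_eq_mul_one_div]
      _ = s j ^ α * (1 / x j₀) ^ α := Real.mul_rpow (hs0 j) (by positivity)
      _ = s j ^ α * m := rfl
  have hgS : ∀ s ∈ S, 0 ≤ g s ∧ g s ≤ B := by
    intro s hs
    rw [hS] at hs
    obtain ⟨hs0, hs1⟩ := hs
    have hterm_nonneg : ∀ j, 0 ≤ (s j / x j) ^ α := fun j =>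
      Real.rpow_nonneg (div_nonneg (hs0 j) (hx j).le) _
    have hbdd_range : BddAbove (Set.range fun j => (s j / x j) ^ α) :=
      (Set.finite_range _).bddAbove
    constructor
    · exact (hterm_nonneg j₀).trans (le_ciSup hbdd_range j₀)
    · refine ciSup_le fun j => ?_
      have h1 : s j ^ α * m ≤ (∑ i, s i ^ α) * m := by
        refine mul_le_mul_of_nonneg_right ?_ hm0.le
        exact Finset.single_le_sum (fun i _ => Real.rpow_nonneg (hs0 i) α)
          (Finset.mem_univ j)
      have h2 : (∑ i, s i ^ α) * m ≤ Mα * m :=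
        mul_le_mul_of_nonneg_right (hMα_ge s hs0 hs1) hm0.le
      calc (s j / x j) ^ α ≤ s j ^ α * m := hterm_le_m s hs0 j
        _ ≤ Mα * m := h1.trans h2
        _ = B := mul_comm _ _
  -- a.e. bounds
  have haeS₁ : ∀ᵐ s ∂(H₁.restrict S), s ∈ S := ae_restrict_mem hSmeas
  have haeS₂ : ∀ᵐ s ∂(H₂.restrict S), s ∈ S := ae_restrict_mem hSmeas
  have h₁ : ∀ᵐ s ∂(H₁.restrict S), 0 ≤ g s ∧ g s ≤ B := haeS₁.mono fun s hs => hgS s hs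
  have h₂ : ∀ᵐ s ∂(H₂.restrict S), 0 ≤ g s ∧ g s ≤ B := haeS₂.mono fun s hs => hgS s hs
  -- the total variation sSup
  set T : ℝ := sSup {r : ℝ | ∃ A : Set (Fin d → ℝ), MeasurableSet A ∧
      r = |(H₁ A).toReal - (H₂ A).toReal|} with hT
  have hTbdd : BddAbove {r : ℝ | ∃ A : Set (Fin d → ℝ), MeasurableSet A ∧
      r = |(H₁ A).toReal - (H₂ A).toReal|} := by
    refine ⟨(H₁ Set.univ).toReal + (H₂ Set.univ).toReal, fun r hr => ?_⟩
    obtain ⟨A, hA, rfl⟩ := hr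
    have h1 : (H₁ A).toReal ≤ (H₁ Set.univ).toReal :=
      ENNReal.toReal_mono (measure_ne_top _ _) (measure_mono (Set.subset_univ A))
    have h2 : (H₂ A).toReal ≤ (H₂ Set.univ).toReal :=
      ENNReal.toReal_mono (measure_ne_top _ _) (measure_mono (Set.subset_univ A))
    have h3 : 0 ≤ (H₁ A).toReal := ENNReal.toReal_nonneg
    have h4 : 0 ≤ (H₂ A).toReal := ENNReal.toReal_nonneg
    rw [abs_le]; constructor <;> [linarith; linarith]
  have hT0 : 0 ≤ T := by
    refine le_csSup hTbdd ⟨∅, MeasurableSet.empty, ?_⟩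
    simp
  have hTle : ∀ A : Set (Fin d → ℝ), MeasurableSet A →
      ((H₁.restrict S) A).toReal - ((H₂.restrict S) A).toReal ≤ T := by
    intro A hA
    rw [Measure.restrict_apply hA, Measure.restrict_apply hA]
    refine (le_abs_self _).trans (le_csSup hTbdd ⟨A ∩ S, hA.inter hSmeas, rfl⟩)
  have hTle' : ∀ A : Set (Fin d → ℝ), MeasurableSet A →
      ((H₂.restrict S) A).toReal - ((H₁.restrict S) A).toReal ≤ T := by
    intro A hA
    rw [Measure.restrict_apply hA, Measure.restrict_apply hA]
    refine le_trans ?_ (le_csSup hTbdd ⟨A ∩ S, hA.inter hSmeas, rfl⟩)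
    rw [abs_sub_comm]
    exact le_abs_self _
  -- the two integrals
  set V₁ : ℝ := ∫ s in S, ⨆ j, (s j / x j) ^ α ∂H₁ with hV₁
  set V₂ : ℝ := ∫ s in S, ⨆ j, (s j / x j) ^ α ∂H₂ with hV₂
  have hV₁g : V₁ = ∫ s, g s ∂(H₁.restrict S) := rfl
  have hV₂g : V₂ = ∫ s, g s ∂(H₂.restrict S) := rfl
  have hVdiff : |V₁ - V₂| ≤ B * T := by
    rw [abs_sub_le_iff]
    constructor
    · rw [hV₁g, hV₂g]
      exact aux_integral_diff_le _ _ hgmeas hBnn h₁ h₂ hTle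
    · rw [hV₁g, hV₂g]
      exact aux_integral_diff_le _ _ hgmeas hBnn h₂ h₁ hTle'
  -- lower bound m ≤ V₁, V₂
  have hterm_meas : Measurable fun s : Fin d → ℝ => (s j₀ / x j₀) ^ α := by
    have h1 : Measurable fun s : Fin d → ℝ => s j₀ / x j₀ :=
      by fun_prop
    exact (Real.continuous_rpow_const hα.le).measurable.comp h1
  have hterm_le_g : ∀ s : Fin d → ℝ, (s j₀ / x j₀) ^ α ≤ g s := fun s =>
    le_ciSup (f := fun j => (s j / x j) ^ α)
      ((Set.finite_range fun j => (s j / x j) ^ α).bddAbove) j₀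
  have hmlower : ∀ (H : Measure (Fin d → ℝ)) [IsFiniteMeasure H], H Sᶜ = 0 →
      (∫ s in S, s j₀ ^ α ∂H = 1) →
      m ≤ ∫ s, g s ∂(H.restrict S) := by
    intro H _ hcH hmomH
    have haeS : ∀ᵐ s ∂(H.restrict S), s ∈ S := ae_restrict_mem hSmeas
    have hintg : Integrable g (H.restrict S) := by
      refine (integrable_const B).mono' hgmeas.aestronglyMeasurable ?_
      filter_upwards [haeS] with s hs
      rw [Real.norm_eq_abs, abs_of_nonneg (hgS s hs).1]
      exact (hgS s hs).2
    have hintterm : Integrable (fun s : Fin d → ℝ => (s j₀ / x j₀) ^ α) (H.restrict S) := by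
      refine (integrable_const B).mono' hterm_meas.aestronglyMeasurable ?_
      filter_upwards [haeS] with s hs
      rw [hS] at hs
      rw [Real.norm_eq_abs,
        abs_of_nonneg (Real.rpow_nonneg (div_nonneg (hs.1 j₀) hxj₀.le) α)]
      exact (hterm_le_m s hs.1 j₀).trans (by
        have h1 : s j₀ ^ α * m ≤ (∑ i, s i ^ α) * m :=
          mul_le_mul_of_nonneg_right
            (Finset.single_le_sum (fun i _ => Real.rpow_nonneg (hs.1 i) α)
              (Finset.mem_univ j₀)) hm0.le
        have h2 : (∑ i, s i ^ α) * m ≤ Mα * m :=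
          mul_le_mul_of_nonneg_right (hMα_ge s hs.1 hs.2) hm0.le
        calc s j₀ ^ α * m ≤ Mα * m := h1.trans h2
          _ = B := mul_comm _ _)
    have heq : ∫ s in S, (s j₀ / x j₀) ^ α ∂H = ∫ s in S, m * s j₀ ^ α ∂H := by
      refine setIntegral_congr_fun hSmeas fun s hs => ?_
      rw [hS] at hs
      calc (s j₀ / x j₀) ^ α = (s j₀ * (1 / x j₀)) ^ α := by rw [div_eq_mul_one_div]
        _ = s j₀ ^ α * (1 / x j₀) ^ α := Real.mul_rpow (hs.1 j₀) (by positivity)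
        _ = m * s j₀ ^ α := mul_comm _ _
    have hval : ∫ s in S, (s j₀ / x j₀) ^ α ∂H = m := by
      rw [heq, integral_const_mul, hmomH, mul_one]
    calc m = ∫ s in S, (s j₀ / x j₀) ^ α ∂H := hval.symm
      _ ≤ ∫ s, g s ∂(H.restrict S) :=
        integral_mono_ae hintterm hintg (Filter.Eventually.of_forall hterm_le_g)
  have hmV₁ : m ≤ V₁ := hV₁g ▸ hmlower H₁ hc₁ (hmom₁ j₀)
  have hmV₂ : m ≤ V₂ := hV₂g ▸ hmlower H₂ hc₂ (hmom₂ j₀)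
  -- final assembly
  calc |Real.exp (-V₁) - Real.exp (-V₂)| ≤ Real.exp (-m) * |V₁ - V₂| :=
        aux_exp_diff V₁ V₂ m hmV₁ hmV₂
    _ ≤ Real.exp (-m) * (B * T) :=
        mul_le_mul_of_nonneg_left hVdiff (Real.exp_pos _).le
    _ = (m * Real.exp (-m)) * (Mα * T) := by rw [hB]; ring
    _ ≤ Real.exp (-1) * (Mα * T) :=
        mul_le_mul_of_nonneg_right (aux_mul_exp_neg_le m) (mul_nonneg hMα0 hT0)
    _ = (Mα / Real.exp 1) * T := by
        rw [Real.exp_neg, div_eq_mul_inv]; ring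
end

section
/- Let d ≥ 1, α > 0, and let Z^{(1)}, Z^{(2)} be random vectors with values in [0,∞)^d such that E[(Z^{(k)}_i)^α] = 1 for every 1 ≤ i ≤ d, P(max_i Z^{(k)}_i > 0) = 1, k = 1,2. For x ∈ (0,∞)^d let I_k(x,ω) be the least index i attaining max_{1≤j≤d} Z^{(k)}_j(ω)/x_j, set Ψ^{(k)}_i(x) = E[ (Z^{(k)}_i)^α · 1{ I_k(x,·) = i } ], V_k(x) = E[ max_{1≤j≤d} (Z^{(k)}_j)^α / x_j^α ] and F_k = exp(−V_k). Then sup_{x ∈ (0,∞)^d} |F₁(x) − F₂(x)| ≤ (1/e) · sup { Σ_{i=1}^d |Ψ^{(1)}_i(u) − Ψ^{(2)}_i(u)| : u ∈ (0,∞)^d, min_{1≤i≤d} u_i = 1 }. -/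
open MeasureTheory

set_option linter.unusedSectionVars false
set_option linter.unusedVariables false


section Aux
variable {Ω : Type*} [MeasurableSpace Ω] (μ : Measure Ω) [IsProbabilityMeasure μ]

lemma psi_aux_integrable (f : Ω → ℝ) (h : ∫ ω, f ω ∂μ = 1) : Integrable f μ := by
  by_contra hc
  rw [integral_undef hc] at h; norm_num at h

lemma psi_aux_pointwise {d : ℕ} (hd : 0 < d) {α : ℝ} (hα : 0 < α)
    (Z : Fin d → Ω → ℝ) (hnn : ∀ i ω, 0 ≤ Z i ω)
    (I : (Fin d → ℝ) → Ω → Fin d)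
    (hImax : ∀ x, (∀ i, 0 < x i) → ∀ ω, Z (I x ω) ω / x (I x ω) = ⨆ j, Z j ω / x j)
    (x : Fin d → ℝ) (hx : ∀ i, 0 < x i) (ω : Ω) :
    (⨆ j, Z j ω ^ α / x j ^ α) = ∑ i, if I x ω = i then Z i ω ^ α / x i ^ α else 0 := by
  haveI : Nonempty (Fin d) := ⟨⟨0, hd⟩⟩
  have hsum : (∑ i, if I x ω = i then Z i ω ^ α / x i ^ α else 0)
      = Z (I x ω) ω ^ α / x (I x ω) ^ α := by
    rw [Finset.sum_ite_eq Finset.univ (I x ω) (fun i => Z i ω ^ α / x i ^ α)]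
    simp
  rw [hsum]
  have key : ∀ j, Z j ω ^ α / x j ^ α = (Z j ω / x j) ^ α := fun j =>
    (Real.div_rpow (hnn j ω) (hx j).le _).symm
  have hmaxj : ∀ j, Z j ω / x j ≤ Z (I x ω) ω / x (I x ω) := by
    intro j
    rw [hImax x hx ω]
    exact le_ciSup (f := fun j => Z j ω / x j) (Set.Finite.bddAbove (Set.finite_range _)) j
  apply le_antisymm
  · apply ciSup_le
    intro j
    rw [key j, key (I x ω)]
    exact Real.rpow_le_rpow (div_nonneg (hnn j ω) (hx j).le) (hmaxj j) hα.le
  · exact le_ciSup (f := fun j => Z j ω ^ α / x j ^ α)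
      (Set.Finite.bddAbove (Set.finite_range _)) (I x ω)

lemma psi_aux_int_ind {d : ℕ} {α : ℝ}
    (Z : Fin d → Ω → ℝ)
    (hmom : ∀ i, ∫ ω, Z i ω ^ α ∂μ = 1)
    (I : (Fin d → ℝ) → Ω → Fin d) (hImeas : ∀ x, Measurable (I x))
    (x : Fin d → ℝ) (i : Fin d) :
    Integrable (fun ω => if I x ω = i then Z i ω ^ α else 0) μ := by
  have heq : (fun ω => if I x ω = i then Z i ω ^ α else 0)
      = Set.indicator {ω | I x ω = i} (fun ω => Z i ω ^ α) := by
    funext ω; simp [Set.indicator_apply, Set.mem_setOf_eq]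
  rw [heq]
  exact (psi_aux_integrable μ _ (hmom i)).indicator ((hImeas x) (measurableSet_singleton i))

lemma psi_aux_decomp {d : ℕ} (hd : 0 < d) {α : ℝ} (hα : 0 < α)
    (Z : Fin d → Ω → ℝ) (hnn : ∀ i ω, 0 ≤ Z i ω)
    (hmom : ∀ i, ∫ ω, Z i ω ^ α ∂μ = 1)
    (I : (Fin d → ℝ) → Ω → Fin d) (hImeas : ∀ x, Measurable (I x))
    (hImax : ∀ x, (∀ i, 0 < x i) → ∀ ω, Z (I x ω) ω / x (I x ω) = ⨆ j, Z j ω / x j)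
    (x : Fin d → ℝ) (hx : ∀ i, 0 < x i) :
    ∫ ω, (⨆ j, Z j ω ^ α / x j ^ α) ∂μ
      = ∑ i, (∫ ω, (if I x ω = i then Z i ω ^ α else 0) ∂μ) / x i ^ α := by
  calc ∫ ω, (⨆ j, Z j ω ^ α / x j ^ α) ∂μ
      = ∫ ω, ∑ i, (if I x ω = i then Z i ω ^ α else 0) / x i ^ α ∂μ := by
        refine integral_congr_ae (Filter.Eventually.of_forall fun ω => ?_)
        show (⨆ j, Z j ω ^ α / x j ^ α) = ∑ i, (if I x ω = i then Z i ω ^ α else 0) / x i ^ α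
        rw [psi_aux_pointwise hd hα Z hnn I hImax x hx ω]
        refine Finset.sum_congr rfl fun i _ => ?_
        split <;> simp
    _ = ∑ i, ∫ ω, (if I x ω = i then Z i ω ^ α else 0) / x i ^ α ∂μ :=
        integral_finset_sum _ (fun i _ => (psi_aux_int_ind μ Z hmom I hImeas x i).div_const _)
    _ = ∑ i, (∫ ω, (if I x ω = i then Z i ω ^ α else 0) ∂μ) / x i ^ α := by
        simp [integral_div]

lemma psi_aux_int_sup {d : ℕ} (hd : 0 < d) {α : ℝ} (hα : 0 < α)
    (Z : Fin d → Ω → ℝ) (hnn : ∀ i ω, 0 ≤ Z i ω)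
    (hmom : ∀ i, ∫ ω, Z i ω ^ α ∂μ = 1)
    (I : (Fin d → ℝ) → Ω → Fin d) (hImeas : ∀ x, Measurable (I x))
    (hImax : ∀ x, (∀ i, 0 < x i) → ∀ ω, Z (I x ω) ω / x (I x ω) = ⨆ j, Z j ω / x j)
    (x : Fin d → ℝ) (hx : ∀ i, 0 < x i) :
    Integrable (fun ω => ⨆ j, Z j ω ^ α / x j ^ α) μ := by
  have heq : (fun ω => ⨆ j, Z j ω ^ α / x j ^ α)
      = fun ω => ∑ i, (if I x ω = i then Z i ω ^ α else 0) / x i ^ α := by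
    funext ω
    rw [psi_aux_pointwise hd hα Z hnn I hImax x hx ω]
    refine Finset.sum_congr rfl fun i _ => ?_
    split <;> simp
  rw [heq]
  exact integrable_finset_sum _ (fun i _ => (psi_aux_int_ind μ Z hmom I hImeas x i).div_const _)

lemma psi_aux_lower {d : ℕ} (hd : 0 < d) {α : ℝ} (hα : 0 < α)
    (Z : Fin d → Ω → ℝ) (hnn : ∀ i ω, 0 ≤ Z i ω)
    (hmom : ∀ i, ∫ ω, Z i ω ^ α ∂μ = 1)
    (I : (Fin d → ℝ) → Ω → Fin d) (hImeas : ∀ x, Measurable (I x))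
    (hImax : ∀ x, (∀ i, 0 < x i) → ∀ ω, Z (I x ω) ω / x (I x ω) = ⨆ j, Z j ω / x j)
    (x : Fin d → ℝ) (hx : ∀ i, 0 < x i) (i₀ : Fin d) :
    1 / x i₀ ^ α ≤ ∫ ω, (⨆ j, Z j ω ^ α / x j ^ α) ∂μ := by
  haveI : Nonempty (Fin d) := ⟨⟨0, hd⟩⟩
  have h1 : ∫ ω, Z i₀ ω ^ α / x i₀ ^ α ∂μ = 1 / x i₀ ^ α := by
    rw [integral_div, hmom i₀]
  rw [← h1]
  refine integral_mono ((psi_aux_integrable μ _ (hmom i₀)).div_const _)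
    (psi_aux_int_sup μ hd hα Z hnn hmom I hImeas hImax x hx) (fun ω => ?_)
  exact le_ciSup (f := fun j => Z j ω ^ α / x j ^ α)
    (Set.Finite.bddAbove (Set.finite_range _)) i₀

lemma psi_aux_I_le {d : ℕ} {Zf : Fin d → Ω → ℝ}
    {I : (Fin d → ℝ) → Ω → Fin d}
    (hImax : ∀ x, (∀ i, 0 < x i) → ∀ ω, Zf (I x ω) ω / x (I x ω) = ⨆ j, Zf j ω / x j)
    (hIleast : ∀ x, (∀ i, 0 < x i) → ∀ ω, ∀ j : Fin d,
      Zf j ω / x j = (⨆ j', Zf j' ω / x j') → I x ω ≤ j)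
    (x y : Fin d → ℝ) (hx : ∀ i, 0 < x i) (hy : ∀ i, 0 < y i)
    (c : ℝ) (hc : 0 < c) (hxy : ∀ i, x i = c * y i) (ω : Ω) :
    I x ω ≤ I y ω := by
  haveI : Nonempty (Fin d) := ⟨I x ω⟩
  apply hIleast x hx ω (I y ω)
  have hval : ∀ j, Zf j ω / x j = (Zf j ω / y j) * c⁻¹ := by
    intro j
    rw [hxy j, mul_comm c (y j), ← div_div, div_eq_mul_inv (Zf j ω / y j) c]
  refine le_antisymm (le_ciSup (f := fun j => Zf j ω / x j)
    (Set.Finite.bddAbove (Set.finite_range _)) (I y ω)) (ciSup_le fun j => ?_)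
  rw [hval j, hval (I y ω)]
  refine mul_le_mul_of_nonneg_right ?_ (inv_nonneg.2 hc.le)
  rw [hImax y hy ω]
  exact le_ciSup (f := fun j => Zf j ω / y j)
    (Set.Finite.bddAbove (Set.finite_range _)) j

lemma psi_aux_bounds {d : ℕ} {α : ℝ}
    (Z : Fin d → Ω → ℝ) (hnn : ∀ i ω, 0 ≤ Z i ω)
    (hmom : ∀ i, ∫ ω, Z i ω ^ α ∂μ = 1)
    (I : (Fin d → ℝ) → Ω → Fin d) (hImeas : ∀ x, Measurable (I x))
    (x : Fin d → ℝ) (i : Fin d) :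
    0 ≤ (∫ ω, (if I x ω = i then Z i ω ^ α else 0) ∂μ) ∧
      (∫ ω, (if I x ω = i then Z i ω ^ α else 0) ∂μ) ≤ 1 := by
  constructor
  · refine integral_nonneg fun ω => ?_
    by_cases h : I x ω = i <;> simp [h, Real.rpow_nonneg (hnn i ω), Pi.zero_apply]
  · rw [← hmom i]
    refine integral_mono (psi_aux_int_ind μ Z hmom I hImeas x i)
      (psi_aux_integrable μ _ (hmom i)) (fun ω => ?_)
    by_cases h : I x ω = i <;> simp [h, Real.rpow_nonneg (hnn i ω)]

lemma exp_sub_exp_le {t a b : ℝ} (ht : t ≤ a) (hab : a ≤ b) :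
    Real.exp (-a) - Real.exp (-b) ≤ Real.exp (-t) * (b - a) := by
  have h1 : Real.exp (-b) = Real.exp (-a) * Real.exp (a - b) := by
    rw [← Real.exp_add]; ring_nf
  have h2 : 1 - Real.exp (a - b) ≤ b - a := by
    have := Real.add_one_le_exp (a - b); linarith
  have h3 : Real.exp (-a) - Real.exp (-b) = Real.exp (-a) * (1 - Real.exp (a - b)) := by
    rw [h1]; ring
  rw [h3]
  calc Real.exp (-a) * (1 - Real.exp (a - b)) ≤ Real.exp (-a) * (b - a) :=
        mul_le_mul_of_nonneg_left h2 (Real.exp_pos _).le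
    _ ≤ Real.exp (-t) * (b - a) :=
        mul_le_mul_of_nonneg_right (Real.exp_le_exp.2 (by linarith)) (by linarith)

lemma exp_abs_sub_le {t a b : ℝ} (ha : t ≤ a) (hb : t ≤ b) :
    |Real.exp (-a) - Real.exp (-b)| ≤ Real.exp (-t) * |a - b| := by
  rcases le_total a b with h | h
  · have key := exp_sub_exp_le ha h
    rw [abs_of_nonneg (sub_nonneg.2 (Real.exp_le_exp.2 (by linarith))),
      abs_of_nonpos (by linarith : a - b ≤ 0)]
    linarith
  · have key := exp_sub_exp_le hb h
    rw [abs_sub_comm, abs_of_nonneg (sub_nonneg.2 (Real.exp_le_exp.2 (by linarith))),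
      abs_of_nonneg (by linarith : 0 ≤ a - b)]
    linarith

end Aux


lemma t_mul_exp_neg_le {t : ℝ} (h : 0 ≤ t) : t * Real.exp (-t) ≤ 1 / Real.exp 1 := by
  have h1 : t ≤ Real.exp (t - 1) := by
    have := Real.add_one_le_exp (t - 1); linarith
  have h2 : t * Real.exp (-t) ≤ Real.exp (t - 1) * Real.exp (-t) :=
    mul_le_mul_of_nonneg_right h1 (Real.exp_pos _).le
  have h3 : Real.exp (t - 1) * Real.exp (-t) = Real.exp (-1) := by
    rw [← Real.exp_add]; ring_nf
  rw [h3] at h2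
  rw [one_div, ← Real.exp_neg]
  exact h2

/-- Ψ-bound (eq. (3.2)) of Theorem 3.1: the Kolmogorov distance of two max-stable
distribution functions with unit-α-Fréchet margins is bounded by `(1/e)` times the
supremum over the section `{min_i u_i = 1}` of `Σ_i |Ψ_i^{(1)}(u) − Ψ_i^{(2)}(u)|`,
where the `Ψ`-functions arise from the least-argmax selectors. -/
theorem kolmogorov_le_psi_bound
    {Ω : Type*} [MeasurableSpace Ω] (μ : Measure Ω) [IsProbabilityMeasure μ]
    (d : ℕ) (hd : 0 < d) (α : ℝ) (hα : 0 < α)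
    (Z₁ Z₂ : Fin d → Ω → ℝ)
    (hm₁ : ∀ i, Measurable (Z₁ i)) (hm₂ : ∀ i, Measurable (Z₂ i))
    (hnn₁ : ∀ i ω, 0 ≤ Z₁ i ω) (hnn₂ : ∀ i ω, 0 ≤ Z₂ i ω)
    (hmom₁ : ∀ i, ∫ ω, Z₁ i ω ^ α ∂μ = 1)
    (hmom₂ : ∀ i, ∫ ω, Z₂ i ω ^ α ∂μ = 1)
    (hpos₁ : ∀ᵐ ω ∂μ, 0 < ⨆ i, Z₁ i ω)
    (hpos₂ : ∀ᵐ ω ∂μ, 0 < ⨆ i, Z₂ i ω)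
    (I₁ I₂ : (Fin d → ℝ) → Ω → Fin d)
    (hI₁meas : ∀ x, Measurable (I₁ x)) (hI₂meas : ∀ x, Measurable (I₂ x))
    (hI₁max : ∀ (x : Fin d → ℝ), (∀ i, 0 < x i) → ∀ ω,
      Z₁ (I₁ x ω) ω / x (I₁ x ω) = ⨆ j, Z₁ j ω / x j)
    (hI₂max : ∀ (x : Fin d → ℝ), (∀ i, 0 < x i) → ∀ ω,
      Z₂ (I₂ x ω) ω / x (I₂ x ω) = ⨆ j, Z₂ j ω / x j)
    (hI₁least : ∀ (x : Fin d → ℝ), (∀ i, 0 < x i) → ∀ ω, ∀ j : Fin d,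
      Z₁ j ω / x j = (⨆ j', Z₁ j' ω / x j') → I₁ x ω ≤ j)
    (hI₂least : ∀ (x : Fin d → ℝ), (∀ i, 0 < x i) → ∀ ω, ∀ j : Fin d,
      Z₂ j ω / x j = (⨆ j', Z₂ j' ω / x j') → I₂ x ω ≤ j)
    (Ψ₁ Ψ₂ : Fin d → (Fin d → ℝ) → ℝ)
    (hΨ₁ : ∀ i x, Ψ₁ i x = ∫ ω, (if I₁ x ω = i then Z₁ i ω ^ α else 0) ∂μ)
    (hΨ₂ : ∀ i x, Ψ₂ i x = ∫ ω, (if I₂ x ω = i then Z₂ i ω ^ α else 0) ∂μ) :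
    ∀ x : Fin d → ℝ, (∀ i, 0 < x i) →
      |Real.exp (-(∫ ω, ⨆ j, Z₁ j ω ^ α / x j ^ α ∂μ)) -
        Real.exp (-(∫ ω, ⨆ j, Z₂ j ω ^ α / x j ^ α ∂μ))| ≤
      (1 / Real.exp 1) *
        sSup {r : ℝ | ∃ u : Fin d → ℝ, (∀ i, 0 < u i) ∧ (⨅ i, u i) = 1 ∧
          r = ∑ i, |Ψ₁ i u - Ψ₂ i u|} := by
  intro x hx
  haveI : Nonempty (Fin d) := ⟨⟨0, hd⟩⟩
  obtain ⟨i₀, hi₀min⟩ := Finite.exists_min x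
  set m : ℝ := x i₀ with hm
  have hmpos : 0 < m := hx i₀
  set u : Fin d → ℝ := fun i => x i / m with hu
  have hupos : ∀ i, 0 < u i := fun i => div_pos (hx i) hmpos
  have hxmu : ∀ i, x i = m * u i := fun i => by
    simp only [hu]; field_simp
  have humx : ∀ i, u i = m⁻¹ * x i := fun i => by
    simp only [hu]; rw [div_eq_inv_mul]
  have hu1 : ∀ i, 1 ≤ u i := fun i => (one_le_div hmpos).2 (hi₀min i)
  have huinf : (⨅ i, u i) = 1 := by
    apply le_antisymm
    · have hui : u i₀ = 1 := by simp only [hu]; field_simp; rfl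
      calc (⨅ i, u i) ≤ u i₀ := ciInf_le (Set.Finite.bddBelow (Set.finite_range u)) i₀
        _ = 1 := hui
    · exact le_ciInf hu1
  -- the argmax selectors agree at x and u
  have hIeq₁ : ∀ ω, I₁ x ω = I₁ u ω := fun ω =>
    le_antisymm (psi_aux_I_le hI₁max hI₁least x u hx hupos m hmpos hxmu ω)
      (psi_aux_I_le hI₁max hI₁least u x hupos hx m⁻¹ (inv_pos.2 hmpos) humx ω)
  have hIeq₂ : ∀ ω, I₂ x ω = I₂ u ω := fun ω =>
    le_antisymm (psi_aux_I_le hI₂max hI₂least x u hx hupos m hmpos hxmu ω)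
      (psi_aux_I_le hI₂max hI₂least u x hupos hx m⁻¹ (inv_pos.2 hmpos) humx ω)
  have hΨeq₁ : ∀ i, Ψ₁ i x = Ψ₁ i u := fun i => by
    rw [hΨ₁ i x, hΨ₁ i u]
    refine integral_congr_ae (Filter.Eventually.of_forall fun ω => ?_)
    show (if I₁ x ω = i then Z₁ i ω ^ α else 0) = (if I₁ u ω = i then Z₁ i ω ^ α else 0)
    rw [hIeq₁ ω]
  have hΨeq₂ : ∀ i, Ψ₂ i x = Ψ₂ i u := fun i => by
    rw [hΨ₂ i x, hΨ₂ i u]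
    refine integral_congr_ae (Filter.Eventually.of_forall fun ω => ?_)
    show (if I₂ x ω = i then Z₂ i ω ^ α else 0) = (if I₂ u ω = i then Z₂ i ω ^ α else 0)
    rw [hIeq₂ ω]
  -- the supremum set
  set Sset : Set ℝ := {r : ℝ | ∃ u : Fin d → ℝ, (∀ i, 0 < u i) ∧ (⨅ i, u i) = 1 ∧
      r = ∑ i, |Ψ₁ i u - Ψ₂ i u|} with hSset
  have hbdd : BddAbove Sset := by
    refine ⟨(d : ℝ), fun r hr => ?_⟩
    obtain ⟨v, hv, hvinf, hrq⟩ := hr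
    rw [hrq]
    calc ∑ i, |Ψ₁ i v - Ψ₂ i v| ≤ ∑ _i : Fin d, (1 : ℝ) := by
          refine Finset.sum_le_sum fun i _ => ?_
          have b1 := psi_aux_bounds μ Z₁ hnn₁ hmom₁ I₁ hI₁meas v i
          have b2 := psi_aux_bounds μ Z₂ hnn₂ hmom₂ I₂ hI₂meas v i
          rw [hΨ₁ i v, hΨ₂ i v, abs_sub_le_iff]
          constructor <;> linarith [b1.1, b1.2, b2.1, b2.2]
      _ = (d : ℝ) := by simp
  have hmem : (∑ i, |Ψ₁ i u - Ψ₂ i u|) ∈ Sset := ⟨u, hupos, huinf, rfl⟩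
  have hsum_le : (∑ i, |Ψ₁ i u - Ψ₂ i u|) ≤ sSup Sset := le_csSup hbdd hmem
  have hSnn : 0 ≤ sSup Sset :=
    le_trans (Finset.sum_nonneg fun i _ => abs_nonneg _) hsum_le
  -- decompositions
  have hV₁ : ∫ ω, (⨆ j, Z₁ j ω ^ α / x j ^ α) ∂μ = ∑ i, Ψ₁ i u / x i ^ α := by
    rw [psi_aux_decomp μ hd hα Z₁ hnn₁ hmom₁ I₁ hI₁meas hI₁max x hx]
    exact Finset.sum_congr rfl fun i _ => by rw [← hΨ₁ i x, hΨeq₁ i]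
  have hV₂ : ∫ ω, (⨆ j, Z₂ j ω ^ α / x j ^ α) ∂μ = ∑ i, Ψ₂ i u / x i ^ α := by
    rw [psi_aux_decomp μ hd hα Z₂ hnn₂ hmom₂ I₂ hI₂meas hI₂max x hx]
    exact Finset.sum_congr rfl fun i _ => by rw [← hΨ₂ i x, hΨeq₂ i]
  have hmα : 0 < m ^ α := Real.rpow_pos_of_pos hmpos α
  have hxα : ∀ i, m ^ α ≤ x i ^ α := fun i =>
    Real.rpow_le_rpow hmpos.le (hi₀min i) hα.le
  -- bound on the difference of the exponents
  have hdiff : |(∫ ω, (⨆ j, Z₁ j ω ^ α / x j ^ α) ∂μ) -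
      (∫ ω, (⨆ j, Z₂ j ω ^ α / x j ^ α) ∂μ)| ≤ (1 / m ^ α) * sSup Sset := by
    rw [hV₁, hV₂, ← Finset.sum_sub_distrib]
    calc |∑ i, (Ψ₁ i u / x i ^ α - Ψ₂ i u / x i ^ α)|
        ≤ ∑ i, |Ψ₁ i u / x i ^ α - Ψ₂ i u / x i ^ α| := Finset.abs_sum_le_sum_abs _ _
      _ = ∑ i, |Ψ₁ i u - Ψ₂ i u| / x i ^ α := by
          refine Finset.sum_congr rfl fun i _ => ?_
          rw [div_sub_div_same, abs_div, abs_of_pos (lt_of_lt_of_le hmα (hxα i))]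
      _ ≤ ∑ i, |Ψ₁ i u - Ψ₂ i u| / m ^ α := by
          refine Finset.sum_le_sum fun i _ => ?_
          gcongr |Ψ₁ i u - Ψ₂ i u| / ?_
          exact hxα i
      _ = (∑ i, |Ψ₁ i u - Ψ₂ i u|) / m ^ α := by rw [Finset.sum_div]
      _ ≤ sSup Sset / m ^ α := by gcongr
      _ = (1 / m ^ α) * sSup Sset := by ring
  -- lower bounds on the exponents
  have ht₁ : 1 / m ^ α ≤ ∫ ω, (⨆ j, Z₁ j ω ^ α / x j ^ α) ∂μ :=
    psi_aux_lower μ hd hα Z₁ hnn₁ hmom₁ I₁ hI₁meas hI₁max x hx i₀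
  have ht₂ : 1 / m ^ α ≤ ∫ ω, (⨆ j, Z₂ j ω ^ α / x j ^ α) ∂μ :=
    psi_aux_lower μ hd hα Z₂ hnn₂ hmom₂ I₂ hI₂meas hI₂max x hx i₀
  -- conclude
  calc |Real.exp (-(∫ ω, ⨆ j, Z₁ j ω ^ α / x j ^ α ∂μ)) -
        Real.exp (-(∫ ω, ⨆ j, Z₂ j ω ^ α / x j ^ α ∂μ))|
      ≤ Real.exp (-(1 / m ^ α)) * |(∫ ω, (⨆ j, Z₁ j ω ^ α / x j ^ α) ∂μ) -
          (∫ ω, (⨆ j, Z₂ j ω ^ α / x j ^ α) ∂μ)| := exp_abs_sub_le ht₁ ht₂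
    _ ≤ Real.exp (-(1 / m ^ α)) * ((1 / m ^ α) * sSup Sset) :=
        mul_le_mul_of_nonneg_left hdiff (Real.exp_pos _).le
    _ = ((1 / m ^ α) * Real.exp (-(1 / m ^ α))) * sSup Sset := by ring
    _ ≤ (1 / Real.exp 1) * sSup Sset :=
        mul_le_mul_of_nonneg_right (t_mul_exp_neg_le (by positivity)) hSnn
end

section
/- Let d ≥ 1 and define the softmax map sm : ℝ^d → ℝ^d by sm(u)_i = exp(u_i) / Σ_{k=1}^d exp(u_k). Then for all u, v ∈ ℝ^d, max_{1≤i≤d} | sm(u)_i − sm(v)_i | ≤ (√2/4) · ( Σ_{i=1}^d (u_i − v_i)² )^{1/2}. -/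
open Finset

/-- Key algebraic bound: for a probability vector `p`,
`∑ k (p i (δ_{ik} - p k))² ≤ 1/8`. -/
lemma softmax_grad_sq_bound {d : ℕ} (p : Fin d → ℝ) (hp : ∀ k, 0 ≤ p k)
    (hs : ∑ k, p k = 1) (i : Fin d) :
    ∑ k, (p i * ((if k = i then 1 else 0) - p k)) ^ 2 ≤ 1 / 8 := by
  have hsplit : ∀ f : Fin d → ℝ,
      ∑ k, f k = f i + ∑ k ∈ Finset.univ.erase i, f k := fun f =>
    (Finset.add_sum_erase _ f (Finset.mem_univ i)).symm
  have hrest : ∑ k ∈ Finset.univ.erase i, p k = 1 - p i := by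
    have := hsplit p; linarith [hs ▸ this]
  have hpi1 : p i ≤ 1 := by
    have h0 : 0 ≤ ∑ k ∈ Finset.univ.erase i, p k :=
      Finset.sum_nonneg fun k _ => hp k
    linarith [hrest]
  rw [hsplit (fun k => (p i * ((if k = i then 1 else 0) - p k)) ^ 2)]
  have h1 : ∑ k ∈ Finset.univ.erase i, (p i * ((if k = i then 1 else 0) - p k)) ^ 2
      = p i ^ 2 * ∑ k ∈ Finset.univ.erase i, (p k) ^ 2 := by
    rw [Finset.mul_sum]
    refine Finset.sum_congr rfl fun k hk => ?_
    rw [if_neg (Finset.ne_of_mem_erase hk)]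
    ring
  have h2 : ∑ k ∈ Finset.univ.erase i, (p k) ^ 2
      ≤ (∑ k ∈ Finset.univ.erase i, p k) ^ 2 :=
    Finset.sum_sq_le_sq_sum_of_nonneg fun k _ => hp k
  rw [h1, if_pos rfl]
  have hpi0 := hp i
  have h3 : ∑ k ∈ Finset.univ.erase i, (p k) ^ 2 ≤ (1 - p i) ^ 2 := hrest ▸ h2
  have h4 : p i ^ 2 * ∑ k ∈ Finset.univ.erase i, (p k) ^ 2 ≤ p i ^ 2 * (1 - p i) ^ 2 :=
    mul_le_mul_of_nonneg_left h3 (sq_nonneg _)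
  nlinarith [h4, sq_nonneg (p i - 1/2), mul_nonneg hpi0 (sub_nonneg.mpr hpi1)]

/-- The softmax map `sm(u)_i = exp(u_i)/Σ_k exp(u_k)` is Lipschitz with constant
`√2/4` from the Euclidean norm on the domain to the sup-norm on the range. -/
theorem softmax_lipschitz
    (d : ℕ) (hd : 0 < d) (u v : Fin d → ℝ) (i : Fin d) :
    |Real.exp (u i) / (∑ k, Real.exp (u k)) -
      Real.exp (v i) / (∑ k, Real.exp (v k))| ≤
    (Real.sqrt 2 / 4) * Real.sqrt (∑ j, (u j - v j) ^ 2) := by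
  haveI : Nonempty (Fin d) := Fin.pos_iff_nonempty.mp hd
  set w : Fin d → ℝ := fun j => v j - u j with hw
  set C : ℝ := (Real.sqrt 2 / 4) * Real.sqrt (∑ j, (u j - v j) ^ 2) with hC
  set g : ℝ → ℝ := fun t => Real.exp (u i + t * w i) / ∑ k, Real.exp (u k + t * w k)
    with hg
  -- positivity of denominators
  have hDpos : ∀ t : ℝ, 0 < ∑ k, Real.exp (u k + t * w k) := fun t =>
    Finset.sum_pos (fun k _ => Real.exp_pos _) Finset.univ_nonempty
  -- derivative of g
  have hderiv : ∀ t : ℝ, HasDerivAt g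
      ((Real.exp (u i + t * w i) * w i * (∑ k, Real.exp (u k + t * w k)) -
        Real.exp (u i + t * w i) * ∑ k, Real.exp (u k + t * w k) * w k) /
        (∑ k, Real.exp (u k + t * w k)) ^ 2) t := by
    intro t
    have hN : ∀ k : Fin d, HasDerivAt (fun s => Real.exp (u k + s * w k))
        (Real.exp (u k + t * w k) * w k) t := by
      intro k
      have : HasDerivAt (fun s : ℝ => u k + s * w k) (w k) t := by
        simpa using (hasDerivAt_mul_const (w k)).const_add (u k)
      exact this.exp
    have hD : HasDerivAt (fun s => ∑ k, Real.exp (u k + s * w k))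
        (∑ k, Real.exp (u k + t * w k) * w k) t :=
      HasDerivAt.fun_sum fun k _ => hN k
    exact (hN i).div hD (hDpos t).ne'
  -- bound on the derivative
  have hbound : ∀ t : ℝ,
      |(Real.exp (u i + t * w i) * w i * (∑ k, Real.exp (u k + t * w k)) -
        Real.exp (u i + t * w i) * ∑ k, Real.exp (u k + t * w k) * w k) /
        (∑ k, Real.exp (u k + t * w k)) ^ 2| ≤ C := by
    intro t
    set S : ℝ := ∑ k, Real.exp (u k + t * w k) with hS
    have hS0 : S ≠ 0 := (hDpos t).ne'
    set p : Fin d → ℝ := fun k => Real.exp (u k + t * w k) / S with hp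
    have hpnn : ∀ k, 0 ≤ p k := fun k => div_nonneg (Real.exp_pos _).le (hDpos t).le
    have hpsum : ∑ k, p k = 1 := by
      rw [hp, ← Finset.sum_div, ← hS, div_self hS0]
    -- rewrite the derivative as an inner product
    have hrw : (Real.exp (u i + t * w i) * w i * S -
        Real.exp (u i + t * w i) * ∑ k, Real.exp (u k + t * w k) * w k) / S ^ 2
        = ∑ k, (p i * ((if k = i then 1 else 0) - p k)) * w k := by
      have h1 : ∑ k, (p i * ((if k = i then 1 else 0) - p k)) * w k
          = p i * w i - p i * ∑ k, p k * w k := by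
        have : ∀ k, (p i * ((if k = i then 1 else 0) - p k)) * w k
            = (if k = i then p i * w i else 0) - p i * (p k * w k) := by
          intro k
          by_cases h : k = i
          · subst h; simp; ring
          · simp [h]; ring
        simp_rw [this, Finset.sum_sub_distrib, Finset.sum_ite_eq' Finset.univ i,
          Finset.mem_univ, if_pos, ← Finset.mul_sum]
      rw [h1, hp]
      simp only [div_mul_eq_mul_div]
      rw [← Finset.sum_div]
      field_simp
    rw [hrw]
    -- Cauchy–Schwarz
    have cs : (∑ k, (p i * ((if k = i then 1 else 0) - p k)) * w k) ^ 2 ≤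
        (∑ k, (p i * ((if k = i then 1 else 0) - p k)) ^ 2) * ∑ k, w k ^ 2 :=
      Finset.sum_mul_sq_le_sq_mul_sq _ _ _
    have hkey := softmax_grad_sq_bound p hpnn hpsum i
    have hwsum : (0:ℝ) ≤ ∑ k, w k ^ 2 := Finset.sum_nonneg fun k _ => sq_nonneg _
    have hsq : (∑ k, (p i * ((if k = i then 1 else 0) - p k)) * w k) ^ 2 ≤
        (1/8) * ∑ k, w k ^ 2 :=
      cs.trans (mul_le_mul_of_nonneg_right hkey hwsum)
    have habs : |∑ k, (p i * ((if k = i then 1 else 0) - p k)) * w k|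
        ≤ Real.sqrt ((1/8) * ∑ k, w k ^ 2) := by
      rw [← Real.sqrt_sq_eq_abs]
      exact Real.sqrt_le_sqrt hsq
    refine habs.trans ?_
    rw [Real.sqrt_mul (by norm_num)]
    have h18 : Real.sqrt (1/8 : ℝ) = Real.sqrt 2 / 4 := by
      rw [show (1/8 : ℝ) = (Real.sqrt 2 / 4) ^ 2 by
        rw [div_pow, Real.sq_sqrt (by norm_num : (0:ℝ) ≤ 2)]; norm_num]
      exact Real.sqrt_sq (by positivity)
    rw [h18, hC]
    have : ∑ k, w k ^ 2 = ∑ j, (u j - v j) ^ 2 := by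
      refine Finset.sum_congr rfl fun k _ => ?_
      rw [hw]; ring
    rw [this]
  -- mean value inequality on [0,1]
  have hmvt : ‖g 1 - g 0‖ ≤ C := by
    refine norm_image_sub_le_of_norm_deriv_le_segment_01'
      (f' := fun t => (Real.exp (u i + t * w i) * w i * (∑ k, Real.exp (u k + t * w k)) -
        Real.exp (u i + t * w i) * ∑ k, Real.exp (u k + t * w k) * w k) /
        (∑ k, Real.exp (u k + t * w k)) ^ 2)
      (fun t _ => (hderiv t).hasDerivWithinAt) (fun t _ => hbound t)
  have hg1 : g 1 = Real.exp (v i) / ∑ k, Real.exp (v k) := by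
    rw [hg]; simp [hw]
  have hg0 : g 0 = Real.exp (u i) / ∑ k, Real.exp (u k) := by
    rw [hg]; simp
  rw [← hg0, ← hg1, abs_sub_comm]
  simpa [Real.norm_eq_abs] using hmvt
end

section
/- Let d ≥ 2 and let Δ = { s ∈ [0,∞)^d : Σ_{i=1}^d s_i = 1 } be the probability simplex. Then sup_{s ∈ Δ} max_{1≤i≤d} s_i · ( Σ_{k=1}^d (1{k=i} − s_k)² )^{1/2} = √2/4, and the supremum is attained at s = (1/2, 1/2, 0, …, 0). -/
private lemma softmax_term_le (d : ℕ) (s : Fin d → ℝ) (hs : ∀ i, 0 ≤ s i)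
    (hsum : (∑ i, s i) = 1) (i : Fin d) :
    s i * Real.sqrt (∑ k, ((if k = i then (1 : ℝ) else 0) - s k) ^ 2)
      ≤ Real.sqrt 2 / 4 := by
  have hsi1 : s i ≤ 1 := by
    rw [← hsum]
    exact Finset.single_le_sum (fun j _ => hs j) (Finset.mem_univ i)
  -- tail sum
  set T : ℝ := ∑ k ∈ Finset.univ.erase i, s k with hT
  have hTval : T = 1 - s i := by
    have := Finset.add_sum_erase Finset.univ s (Finset.mem_univ i)
    rw [hsum] at this
    linarith [this]
  have hTnn : 0 ≤ T := Finset.sum_nonneg fun j _ => hs j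
  have hX : (∑ k, ((if k = i then (1 : ℝ) else 0) - s k) ^ 2) ≤ 2 * (1 - s i) ^ 2 := by
    have hsplit : (∑ k, ((if k = i then (1 : ℝ) else 0) - s k) ^ 2)
        = (1 - s i) ^ 2 + ∑ k ∈ Finset.univ.erase i, (s k) ^ 2 := by
      rw [← Finset.add_sum_erase Finset.univ _ (Finset.mem_univ i)]
      simp only [if_pos rfl]
      congr 1
      refine Finset.sum_congr rfl fun k hk => ?_
      rw [if_neg (Finset.ne_of_mem_erase hk)]
      ring
    have htail : (∑ k ∈ Finset.univ.erase i, (s k) ^ 2) ≤ T ^ 2 := by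
      have : (∑ k ∈ Finset.univ.erase i, (s k) ^ 2)
          ≤ ∑ k ∈ Finset.univ.erase i, s k * T := by
        refine Finset.sum_le_sum fun k hk => ?_
        have hk' : s k ≤ T := Finset.single_le_sum (fun j _ => hs j) hk
        calc s k ^ 2 = s k * s k := sq (s k)
          _ ≤ s k * T := mul_le_mul_of_nonneg_left hk' (hs k)
      rw [← Finset.sum_mul] at this
      calc (∑ k ∈ Finset.univ.erase i, (s k) ^ 2) ≤ T * T := this
        _ = T ^ 2 := (sq T).symm
    rw [hsplit]
    rw [hTval] at htail
    linarith
  have hXnn : (0:ℝ) ≤ ∑ k, ((if k = i then (1 : ℝ) else 0) - s k) ^ 2 :=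
    Finset.sum_nonneg fun k _ => sq_nonneg _
  have hsq : Real.sqrt (∑ k, ((if k = i then (1 : ℝ) else 0) - s k) ^ 2)
      ≤ Real.sqrt 2 * (1 - s i) := by
    have h1 : Real.sqrt (2 * (1 - s i) ^ 2) = Real.sqrt 2 * (1 - s i) := by
      rw [Real.sqrt_mul (by norm_num : (0:ℝ) ≤ 2), Real.sqrt_sq (by linarith)]
    calc Real.sqrt (∑ k, ((if k = i then (1 : ℝ) else 0) - s k) ^ 2)
        ≤ Real.sqrt (2 * (1 - s i) ^ 2) := Real.sqrt_le_sqrt hX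
      _ = Real.sqrt 2 * (1 - s i) := h1
  calc s i * Real.sqrt (∑ k, ((if k = i then (1 : ℝ) else 0) - s k) ^ 2)
      ≤ s i * (Real.sqrt 2 * (1 - s i)) := mul_le_mul_of_nonneg_left hsq (hs i)
    _ ≤ Real.sqrt 2 / 4 := by
        nlinarith [Real.sqrt_nonneg 2, mul_nonneg (Real.sqrt_nonneg 2) (sq_nonneg (s i - 1/2))]

/-- Sharpness of the softmax Lipschitz constant: over the probability simplex,
`sup_s max_i s_i · ‖e_i − s‖₂ = √2/4`, attained at `s = (1/2, 1/2, 0, …, 0)`. -/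
theorem softmax_jacobian_norm_sup
    (d : ℕ) (hd : 2 ≤ d)
    (f : (Fin d → ℝ) → ℝ)
    (hf : ∀ s : Fin d → ℝ,
      f s = ⨆ i, s i * Real.sqrt (∑ k, ((if k = i then (1 : ℝ) else 0) - s k) ^ 2))
    (s₀ : Fin d → ℝ)
    (hs₀ : s₀ = fun j : Fin d => if (j : ℕ) < 2 then (1 : ℝ) / 2 else 0) :
    sSup {r : ℝ | ∃ s : Fin d → ℝ, (∀ i, 0 ≤ s i) ∧ (∑ i, s i) = 1 ∧ r = f s}
        = Real.sqrt 2 / 4 ∧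
      (∀ i, 0 ≤ s₀ i) ∧ (∑ i, s₀ i) = 1 ∧ f s₀ = Real.sqrt 2 / 4 := by
  have hdpos : 0 < d := by omega
  haveI : Nonempty (Fin d) := ⟨⟨0, hdpos⟩⟩
  set i0 : Fin d := ⟨0, by omega⟩ with hi0
  set i1 : Fin d := ⟨1, by omega⟩ with hi1
  have hne : i0 ≠ i1 := by simp [hi0, hi1, Fin.ext_iff]
  -- basic facts about s₀
  have hs₀nn : ∀ i, 0 ≤ s₀ i := by
    intro i; rw [hs₀]; dsimp only; split <;> norm_num
  have hs₀split : ∀ j : Fin d,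
      s₀ j = (if j = i0 then (1:ℝ)/2 else 0) + (if j = i1 then (1:ℝ)/2 else 0) := by
    intro j
    rw [hs₀]
    dsimp only
    by_cases h0 : j = i0
    · subst h0
      rw [if_pos (by simp [hi0] : (i0 : ℕ) < 2), if_pos rfl, if_neg hne]
      norm_num
    · by_cases h1 : j = i1
      · subst h1
        rw [if_pos (by simp [hi1] : (i1 : ℕ) < 2), if_neg (Ne.symm hne), if_pos rfl]
        norm_num
      · have hj : ¬ (j : ℕ) < 2 := by
          intro h
          have : (j : ℕ) = 0 ∨ (j : ℕ) = 1 := by omega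
          rcases this with h | h
          · exact h0 (Fin.ext h)
          · exact h1 (Fin.ext h)
        rw [if_neg hj, if_neg h0, if_neg h1]
        norm_num
  have hs₀sum : (∑ i, s₀ i) = 1 := by
    rw [Finset.sum_congr rfl fun j _ => hs₀split j, Finset.sum_add_distrib]
    rw [Finset.sum_ite_eq' Finset.univ i0, Finset.sum_ite_eq' Finset.univ i1]
    norm_num
  -- the i0-term at s₀
  have hsumsq : (∑ k, ((if k = i0 then (1 : ℝ) else 0) - s₀ k) ^ 2) = 1/2 := by
    have hpt : ∀ k : Fin d, ((if k = i0 then (1 : ℝ) else 0) - s₀ k) ^ 2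
        = (if k = i0 then (1:ℝ)/4 else 0) + (if k = i1 then (1:ℝ)/4 else 0) := by
      intro k
      rw [hs₀split k]
      by_cases h0 : k = i0
      · subst h0; simp [hne]; norm_num
      · by_cases h1 : k = i1
        · subst h1; simp [hne.symm, h0]; norm_num
        · simp [h0, h1]
    rw [Finset.sum_congr rfl fun k _ => hpt k, Finset.sum_add_distrib]
    rw [Finset.sum_ite_eq' Finset.univ i0, Finset.sum_ite_eq' Finset.univ i1]
    norm_num
  have hs₀i0 : s₀ i0 = 1/2 := by rw [hs₀split i0, if_pos rfl, if_neg hne]; norm_num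
  have hsqrt_half : Real.sqrt (1/2 : ℝ) = Real.sqrt 2 / 2 := by
    have h : ((1:ℝ)/2) = (Real.sqrt 2 / 2)^2 := by
      rw [div_pow, Real.sq_sqrt (by norm_num : (0:ℝ) ≤ 2)]; norm_num
    rw [h, Real.sqrt_sq (by positivity)]
  have hterm0 : s₀ i0 * Real.sqrt (∑ k, ((if k = i0 then (1 : ℝ) else 0) - s₀ k) ^ 2)
      = Real.sqrt 2 / 4 := by
    rw [hsumsq, hs₀i0, hsqrt_half]; ring
  -- bddAbove of ranges
  have hfs₀ : f s₀ = Real.sqrt 2 / 4 := by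
    rw [hf s₀]
    apply le_antisymm
    · exact ciSup_le (softmax_term_le d s₀ hs₀nn hs₀sum)
    · rw [← hterm0]
      exact le_ciSup (f := fun i => s₀ i * Real.sqrt
        (∑ k, ((if k = i then (1:ℝ) else 0) - s₀ k) ^ 2))
        (Set.Finite.bddAbove (Set.finite_range _)) i0
  refine ⟨?_, hs₀nn, hs₀sum, hfs₀⟩
  have hub : ∀ r ∈ {r : ℝ | ∃ s : Fin d → ℝ, (∀ i, 0 ≤ s i) ∧ (∑ i, s i) = 1 ∧ r = f s},
      r ≤ Real.sqrt 2 / 4 := by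
    rintro r ⟨s, hsnn, hssum, rfl⟩
    rw [hf s]
    exact ciSup_le (softmax_term_le d s hsnn hssum)
  have hmem : Real.sqrt 2 / 4 ∈
      {r : ℝ | ∃ s : Fin d → ℝ, (∀ i, 0 ≤ s i) ∧ (∑ i, s i) = 1 ∧ r = f s} :=
    ⟨s₀, hs₀nn, hs₀sum, hfs₀.symm⟩
  exact le_antisymm (csSup_le ⟨_, hmem⟩ hub) (le_csSup ⟨Real.sqrt 2 / 4, hub⟩ hmem)
end

section
/- Let d ≥ 1, p ∈ (0,∞), α > 0, and let H be a finite Borel measure on ℝ^d concentrated on the positive ℓ_p-unit sphere S = { s ∈ [0,∞)^d : Σ_{i=1}^d s_i^p = 1 }, such that ∫_S s_i^{α} H(ds) = 1 for every 1 ≤ i ≤ d. Then d^{min(1, α/p)} ≤ H(S) ≤ d^{max(1, α/p)}. -/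
open MeasureTheory

private lemma aux_sum_le_one {d : ℕ} {q : ℝ} (hq1 : 1 ≤ q) (x : Fin d → ℝ)
    (hx : ∀ i, 0 ≤ x i) (hsum : ∑ i, x i = 1) : ∑ i, x i ^ q ≤ 1 := by
  have hle : ∀ i, x i ^ q ≤ x i := by
    intro i
    rcases eq_or_lt_of_le (hx i) with h0 | h0
    · rw [← h0, Real.zero_rpow (by linarith)]
    · have hx1 : x i ≤ 1 := by
        rw [← hsum]
        exact Finset.single_le_sum (fun j _ => hx j) (Finset.mem_univ i)
      calc x i ^ q ≤ x i ^ (1 : ℝ) := Real.rpow_le_rpow_of_exponent_ge h0 hx1 hq1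
        _ = x i := Real.rpow_one _
  calc ∑ i, x i ^ q ≤ ∑ i, x i := Finset.sum_le_sum fun i _ => hle i
    _ = 1 := hsum

private lemma aux_one_le_sum {d : ℕ} {q : ℝ} (hq0 : 0 < q) (hq1 : q ≤ 1) (x : Fin d → ℝ)
    (hx : ∀ i, 0 ≤ x i) (hsum : ∑ i, x i = 1) : 1 ≤ ∑ i, x i ^ q := by
  have hle : ∀ i, x i ≤ x i ^ q := by
    intro i
    rcases eq_or_lt_of_le (hx i) with h0 | h0
    · rw [← h0, Real.zero_rpow hq0.ne']
    · have hx1 : x i ≤ 1 := by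
        rw [← hsum]
        exact Finset.single_le_sum (fun j _ => hx j) (Finset.mem_univ i)
      calc x i = x i ^ (1 : ℝ) := (Real.rpow_one _).symm
        _ ≤ x i ^ q := Real.rpow_le_rpow_of_exponent_ge h0 hx1 hq1
  calc (1 : ℝ) = ∑ i, x i := hsum.symm
    _ ≤ ∑ i, x i ^ q := Finset.sum_le_sum fun i _ => hle i

private lemma aux_lower {d : ℕ} (hd : 0 < d) {q : ℝ} (hq1 : 1 ≤ q) (x : Fin d → ℝ)
    (hx : ∀ i, 0 ≤ x i) (hsum : ∑ i, x i = 1) :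
    (d : ℝ) ^ (1 - q) ≤ ∑ i, x i ^ q := by
  have hd' : (0 : ℝ) < d := Nat.cast_pos.2 hd
  have hdne : (d : ℝ) ≠ 0 := hd'.ne'
  have J := Real.rpow_arith_mean_le_arith_mean_rpow Finset.univ (fun _ => (d : ℝ)⁻¹) x
    (fun i _ => by positivity)
    (by simp [Finset.sum_const, Finset.card_univ, nsmul_eq_mul, mul_inv_cancel₀ hdne])
    (fun i _ => hx i) hq1
  have h1 : ∑ i, (d : ℝ)⁻¹ * x i = (d : ℝ)⁻¹ := by
    rw [← Finset.mul_sum, hsum, mul_one]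
  have h2 : ∑ i, (d : ℝ)⁻¹ * x i ^ q = (d : ℝ)⁻¹ * ∑ i, x i ^ q := by
    rw [Finset.mul_sum]
  rw [h1, h2] at J
  have J' : (d : ℝ) * (d : ℝ)⁻¹ ^ q ≤ ∑ i, x i ^ q := by
    calc (d : ℝ) * (d : ℝ)⁻¹ ^ q ≤ (d : ℝ) * ((d : ℝ)⁻¹ * ∑ i, x i ^ q) :=
          mul_le_mul_of_nonneg_left J hd'.le
      _ = ∑ i, x i ^ q := by rw [← mul_assoc, mul_inv_cancel₀ hdne, one_mul]
  calc (d : ℝ) ^ (1 - q) = (d : ℝ) ^ (1 : ℝ) * (d : ℝ) ^ (-q) := by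
        rw [← Real.rpow_add hd']; ring_nf
    _ = (d : ℝ) * (d : ℝ)⁻¹ ^ q := by
        rw [Real.rpow_one, Real.inv_rpow hd'.le, Real.rpow_neg hd'.le]
    _ ≤ ∑ i, x i ^ q := J'

private lemma aux_upper {d : ℕ} (hd : 0 < d) {q : ℝ} (hq0 : 0 < q) (hq1 : q ≤ 1)
    (x : Fin d → ℝ) (hx : ∀ i, 0 ≤ x i) (hsum : ∑ i, x i = 1) :
    ∑ i, x i ^ q ≤ (d : ℝ) ^ (1 - q) := by
  have hd' : (0 : ℝ) < d := Nat.cast_pos.2 hd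
  have hdne : (d : ℝ) ≠ 0 := hd'.ne'
  have hq' : 1 ≤ 1 / q := (le_div_iff₀ hq0).2 (by linarith)
  have J := Real.arith_mean_le_rpow_mean Finset.univ (fun _ => (d : ℝ)⁻¹)
    (fun i => x i ^ q) (fun i _ => by positivity)
    (by simp [Finset.sum_const, Finset.card_univ, nsmul_eq_mul, mul_inv_cancel₀ hdne])
    (fun i _ => Real.rpow_nonneg (hx i) q) hq'
  have h3 : ∀ i, (x i ^ q) ^ (1 / q) = x i := by
    intro i
    rw [← Real.rpow_mul (hx i), mul_one_div_cancel hq0.ne', Real.rpow_one]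
  have h4 : (∑ i, (d : ℝ)⁻¹ * (x i ^ q) ^ (1 / q)) ^ (1 / (1 / q)) = (d : ℝ)⁻¹ ^ q := by
    have : ∑ i, (d : ℝ)⁻¹ * (x i ^ q) ^ (1 / q) = (d : ℝ)⁻¹ := by
      simp_rw [h3]
      rw [← Finset.mul_sum, hsum, mul_one]
    rw [this, one_div_one_div]
  rw [h4] at J
  have h2 : ∑ i, (d : ℝ)⁻¹ * x i ^ q = (d : ℝ)⁻¹ * ∑ i, x i ^ q := by
    rw [Finset.mul_sum]
  rw [h2] at J
  have J' : ∑ i, x i ^ q ≤ (d : ℝ) * (d : ℝ)⁻¹ ^ q := by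
    calc ∑ i, x i ^ q = (d : ℝ) * ((d : ℝ)⁻¹ * ∑ i, x i ^ q) := by
          rw [← mul_assoc, mul_inv_cancel₀ hdne, one_mul]
      _ ≤ (d : ℝ) * (d : ℝ)⁻¹ ^ q := mul_le_mul_of_nonneg_left J hd'.le
  calc ∑ i, x i ^ q ≤ (d : ℝ) * (d : ℝ)⁻¹ ^ q := J'
    _ = (d : ℝ) ^ (1 : ℝ) * (d : ℝ) ^ (-q) := by
        rw [Real.rpow_one, Real.inv_rpow hd'.le, Real.rpow_neg hd'.le]
    _ = (d : ℝ) ^ (1 - q) := by rw [← Real.rpow_add hd']; ring_nf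

/-- Two-sided bound on the total mass of an angular measure on the positive
ℓ_p-unit sphere normalized by `∫_S s_i^α H(ds) = 1`:
`d^{min(1, α/p)} ≤ H(S) ≤ d^{max(1, α/p)}`. -/
theorem angular_measure_total_mass_bounds
    (d : ℕ) (hd : 0 < d) (p α : ℝ) (hp : 0 < p) (hα : 0 < α)
    (H : Measure (Fin d → ℝ)) [IsFiniteMeasure H]
    (S : Set (Fin d → ℝ))
    (hS : S = {s : Fin d → ℝ | (∀ i, 0 ≤ s i) ∧ (∑ i, s i ^ p) = 1})
    (hc : H Sᶜ = 0)
    (hmom : ∀ i, ∫ s in S, s i ^ α ∂H = 1) :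
    (d : ℝ) ^ min 1 (α / p) ≤ (H S).toReal ∧
      (H S).toReal ≤ (d : ℝ) ^ max 1 (α / p) := by
  have hd' : (0 : ℝ) < d := Nat.cast_pos.2 hd
  set q : ℝ := α / p with hq_def
  have hq0 : 0 < q := div_pos hα hp
  -- continuity of rpow with positive exponent
  have hcontp : Continuous fun x : ℝ => x ^ p := by
    rw [continuous_iff_continuousAt]
    intro x
    exact Real.continuousAt_rpow_const x p (Or.inr hp.le)
  have hcontα : Continuous fun x : ℝ => x ^ α := by
    rw [continuous_iff_continuousAt]
    intro x
    exact Real.continuousAt_rpow_const x α (Or.inr hα.le)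
  -- S is measurable
  have hSm : MeasurableSet S := by
    rw [hS]
    have : {s : Fin d → ℝ | (∀ i, 0 ≤ s i) ∧ (∑ i, s i ^ p) = 1}
        = (⋂ i, {s : Fin d → ℝ | 0 ≤ s i}) ∩ {s : Fin d → ℝ | (∑ i, s i ^ p) = 1} := by
      ext s; simp [Set.mem_iInter]
    rw [this]
    refine (MeasurableSet.iInter fun i =>
      measurableSet_le measurable_const (measurable_pi_apply i)).inter ?_
    exact measurableSet_eq_fun
      ((continuous_finset_sum _ fun i _ => hcontp.comp (continuous_apply i)).measurable)
      measurable_const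
  -- basic facts on S
  have hS_nonneg : ∀ s ∈ S, ∀ i, 0 ≤ s i := by
    intro s hs; rw [hS] at hs; exact hs.1
  have hS_sum : ∀ s ∈ S, (∑ i, s i ^ p) = 1 := by
    intro s hs; rw [hS] at hs; exact hs.2
  have hS_le_one : ∀ s ∈ S, ∀ i, s i ≤ 1 := by
    intro s hs i
    by_contra hlt
    push_neg at hlt
    have h1 : (1 : ℝ) < s i ^ p := by
      have := Real.rpow_lt_rpow (by norm_num : (0:ℝ) ≤ 1) hlt hp
      rwa [Real.one_rpow] at this
    have h2 : s i ^ p ≤ ∑ j, s j ^ p :=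
      Finset.single_le_sum (fun j _ => Real.rpow_nonneg (hS_nonneg s hs j) p)
        (Finset.mem_univ i)
    rw [hS_sum s hs] at h2
    linarith
  -- each coordinate power is integrable on S
  have hint : ∀ i : Fin d, IntegrableOn (fun s : Fin d → ℝ => s i ^ α) S H := by
    intro i
    refine Integrable.mono' (integrable_const 1)
      ((hcontα.comp (continuous_apply i)).measurable.aestronglyMeasurable) ?_
    filter_upwards [ae_restrict_mem hSm] with s hs
    rw [Real.norm_eq_abs, abs_of_nonneg (Real.rpow_nonneg (hS_nonneg s hs i) α)]
    exact Real.rpow_le_one (hS_nonneg s hs i) (hS_le_one s hs i) hα.le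
  have hintg : IntegrableOn (fun s : Fin d → ℝ => ∑ i, s i ^ α) S H := by
    exact integrable_finset_sum _ fun i _ => hint i
  have hintc : ∀ c : ℝ, IntegrableOn (fun _ : Fin d → ℝ => c) S H := fun c =>
    integrableOn_const (measure_lt_top H S).ne
  -- total integral equals d
  have hTd : ∫ s in S, (∑ i, s i ^ α) ∂H = d := by
    rw [integral_finset_sum _ fun i _ => hint i]
    simp only [hmom, Finset.sum_const, Finset.card_univ, Fintype.card_fin, nsmul_eq_mul, mul_one]
  -- pointwise rewriting: s i ^ α = (s i ^ p) ^ q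
  have hrw : ∀ s ∈ S, ∀ i, s i ^ α = (s i ^ p) ^ q := by
    intro s hs i
    rw [← Real.rpow_mul (hS_nonneg s hs i)]
    congr 1
    rw [hq_def]
    field_simp
  have hx_facts : ∀ s ∈ S, (∀ i, 0 ≤ s i ^ p) ∧ (∑ i, s i ^ p) = 1 := by
    intro s hs
    exact ⟨fun i => Real.rpow_nonneg (hS_nonneg s hs i) p, hS_sum s hs⟩
  have hconst : ∀ c : ℝ, ∫ _ in S, c ∂H = (H S).toReal * c := by
    intro c
    rw [setIntegral_const, smul_eq_mul, measureReal_def]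
  have hAnonneg : 0 ≤ (H S).toReal := ENNReal.toReal_nonneg
  rcases le_total 1 q with hq1 | hq1
  · -- q ≥ 1 : d^{1-q} ≤ g ≤ 1 on S
    have hub : ∀ s ∈ S, (∑ i, s i ^ α) ≤ 1 := by
      intro s hs
      have := aux_sum_le_one hq1 (fun i => s i ^ p) (hx_facts s hs).1 (hx_facts s hs).2
      calc (∑ i, s i ^ α) = ∑ i, (s i ^ p) ^ q :=
            Finset.sum_congr rfl fun i _ => hrw s hs i
        _ ≤ 1 := this
    have hlb : ∀ s ∈ S, (d : ℝ) ^ (1 - q) ≤ ∑ i, s i ^ α := by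
      intro s hs
      have := aux_lower hd hq1 (fun i => s i ^ p) (hx_facts s hs).1 (hx_facts s hs).2
      calc (d : ℝ) ^ (1 - q) ≤ ∑ i, (s i ^ p) ^ q := this
        _ = ∑ i, s i ^ α := (Finset.sum_congr rfl fun i _ => (hrw s hs i)).symm
    have hI1 : (d : ℝ) ≤ (H S).toReal := by
      have := setIntegral_mono_on hintg (hintc 1) hSm hub
      rw [hTd, hconst 1, mul_one] at this
      exact this
    have hI2 : (d : ℝ) ^ (1 - q) * (H S).toReal ≤ (d : ℝ) := by
      have := setIntegral_mono_on (hintc ((d : ℝ) ^ (1 - q))) hintg hSm hlb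
      rw [hTd, hconst] at this
      linarith [this]
    constructor
    · rw [min_eq_left hq1, Real.rpow_one]
      exact hI1
    · rw [max_eq_right hq1]
      have hpow : (d : ℝ) = (d : ℝ) ^ (1 - q) * (d : ℝ) ^ q := by
        rw [← Real.rpow_add hd', sub_add_cancel, Real.rpow_one]
      exact le_of_mul_le_mul_left (hI2.trans_eq hpow) (Real.rpow_pos_of_pos hd' _)
  · -- q ≤ 1 : 1 ≤ g ≤ d^{1-q} on S
    have hlb : ∀ s ∈ S, (1 : ℝ) ≤ ∑ i, s i ^ α := by
      intro s hs
      have := aux_one_le_sum hq0 hq1 (fun i => s i ^ p) (hx_facts s hs).1 (hx_facts s hs).2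
      calc (1 : ℝ) ≤ ∑ i, (s i ^ p) ^ q := this
        _ = ∑ i, s i ^ α := (Finset.sum_congr rfl fun i _ => (hrw s hs i)).symm
    have hub : ∀ s ∈ S, (∑ i, s i ^ α) ≤ (d : ℝ) ^ (1 - q) := by
      intro s hs
      have := aux_upper hd hq0 hq1 (fun i => s i ^ p) (hx_facts s hs).1 (hx_facts s hs).2
      calc (∑ i, s i ^ α) = ∑ i, (s i ^ p) ^ q :=
            Finset.sum_congr rfl fun i _ => hrw s hs i
        _ ≤ (d : ℝ) ^ (1 - q) := this
    have hI1 : (H S).toReal ≤ (d : ℝ) := by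
      have := setIntegral_mono_on (hintc 1) hintg hSm hlb
      rw [hTd, hconst 1, mul_one] at this
      exact this
    have hI2 : (d : ℝ) ≤ (d : ℝ) ^ (1 - q) * (H S).toReal := by
      have := setIntegral_mono_on hintg (hintc ((d : ℝ) ^ (1 - q))) hSm hub
      rw [hTd, hconst] at this
      linarith [this]
    constructor
    · rw [min_eq_right hq1]
      have hpow : (d : ℝ) = (d : ℝ) ^ (1 - q) * (d : ℝ) ^ q := by
        rw [← Real.rpow_add hd', sub_add_cancel, Real.rpow_one]
      exact le_of_mul_le_mul_left (hpow.symm.trans_le hI2) (Real.rpow_pos_of_pos hd' _)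
    · rw [max_eq_left hq1, Real.rpow_one]
      exact hI1
end

section
/- Let d ≥ 2 be an integer and α > 0. Then sup_{x ∈ (0,∞)^d} | exp( − max_{1≤i≤d} x_i^{−α} ) − exp( − Σ_{i=1}^d x_i^{−α} ) | = ((d−1)/d) · d^{−1/(d−1)}. In particular, the value does not depend on α. -/
private lemma cpow_aux (d : ℕ) (hd : 2 ≤ d) :
    ((d:ℝ) ^ (-(1/((d:ℝ)-1)))) ^ (d - 1) = 1 / d := by
  have hD : (2:ℝ) ≤ d := by exact_mod_cast hd
  have hD0 : (0:ℝ) < d := by linarith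
  have hcast : ((d - 1 : ℕ) : ℝ) = (d:ℝ) - 1 := by
    have h1 : 1 ≤ d := by omega
    push_cast [h1]
    ring
  rw [← Real.rpow_natCast ((d:ℝ) ^ (-(1/((d:ℝ)-1)))) (d-1), ← Real.rpow_mul hD0.le, hcast]
  have h2 : -(1/((d:ℝ)-1)) * ((d:ℝ)-1) = -1 := by
    have : (d:ℝ) - 1 ≠ 0 := by linarith
    field_simp
  rw [h2, Real.rpow_neg_one, one_div]

private lemma cpow_d (d : ℕ) (hd : 2 ≤ d) :
    ((d:ℝ) ^ (-(1/((d:ℝ)-1)))) ^ d = ((d:ℝ) ^ (-(1/((d:ℝ)-1)))) / d := by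
  calc ((d:ℝ) ^ (-(1/((d:ℝ)-1)))) ^ d
      = ((d:ℝ) ^ (-(1/((d:ℝ)-1)))) ^ (d-1) * ((d:ℝ) ^ (-(1/((d:ℝ)-1)))) := by
        rw [← pow_succ]; congr 1; omega
    _ = (1/d) * ((d:ℝ) ^ (-(1/((d:ℝ)-1)))) := by rw [cpow_aux d hd]
    _ = ((d:ℝ) ^ (-(1/((d:ℝ)-1)))) / d := by ring

private lemma key_ineq (d : ℕ) (hd : 2 ≤ d) (u : ℝ) (hu : 0 ≤ u) :
    u - u ^ d ≤ ((d:ℝ)-1)/d * (d:ℝ) ^ (-(1/((d:ℝ)-1))) := by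
  have hD : (2:ℝ) ≤ d := by exact_mod_cast hd
  have hD0 : (0:ℝ) < d := by linarith
  set c : ℝ := (d:ℝ) ^ (-(1/((d:ℝ)-1))) with hc_def
  have hc : 0 < c := Real.rpow_pos_of_pos hD0 _
  have hcd : c ^ d = c / d := cpow_d d hd
  set v := u / c with hv
  have hu' : u = v * c := (div_mul_cancel₀ u hc.ne').symm
  have hud : u ^ d = v ^ d * (c / d) := by rw [hu', mul_pow, hcd]
  have hb' : 1 + (d:ℝ) * (v - 1) ≤ v ^ d := by
    have hv0 : 0 ≤ v := div_nonneg hu hc.le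
    have hb := one_add_mul_le_pow (a := v - 1) (by linarith) d
    have he : 1 + (v - 1) = v := by ring
    rwa [he] at hb
  have h2 : (c / d) * (1 + (d:ℝ) * (v - 1)) ≤ (c / d) * v ^ d :=
    mul_le_mul_of_nonneg_left hb' (by positivity)
  have hexp : (c/d) * (1 + (d:ℝ)*(v-1)) = c/d + v*c - c := by
    field_simp
    ring
  rw [hexp] at h2
  have hM : ((d:ℝ)-1)/(d:ℝ) * c = c - c/d := by field_simp
  rw [hM]
  linarith [h2, hu', hud]

/-- Example 4.5: the Kolmogorov distance between the comonotonic and the independent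
max-stable distributions with unit-α-Fréchet margins equals
`((d−1)/d) · d^{−1/(d−1)}`, independently of `α`. -/
theorem kolmogorov_comonotonic_independent
    (d : ℕ) (hd : 2 ≤ d) (α : ℝ) (hα : 0 < α) :
    sSup {r : ℝ | ∃ x : Fin d → ℝ, (∀ i, 0 < x i) ∧
        r = |Real.exp (-(⨆ i, x i ^ (-α))) - Real.exp (-(∑ i, x i ^ (-α)))|}
      = ((d : ℝ) - 1) / d * (d : ℝ) ^ (-(1 / ((d : ℝ) - 1))) := by
  have hD : (2:ℝ) ≤ d := by exact_mod_cast hd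
  have hD0 : (0:ℝ) < d := by linarith
  have hD1 : (1:ℝ) < d := by linarith
  have hi : Nonempty (Fin d) := ⟨⟨0, by omega⟩⟩
  set c : ℝ := (d:ℝ) ^ (-(1/((d:ℝ)-1))) with hc_def
  have hc : 0 < c := Real.rpow_pos_of_pos hD0 _
  set M : ℝ := ((d:ℝ)-1)/d * c with hM_def
  have hM0 : 0 ≤ M := mul_nonneg (div_nonneg (by linarith) hD0.le) hc.le
  have hub : ∀ r ∈ {r : ℝ | ∃ x : Fin d → ℝ, (∀ i, 0 < x i) ∧
      r = |Real.exp (-(⨆ i, x i ^ (-α))) - Real.exp (-(∑ i, x i ^ (-α)))|}, r ≤ M := by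
    rintro r ⟨x, hx, rfl⟩
    have htpos : ∀ i, 0 < x i ^ (-α) := fun i => Real.rpow_pos_of_pos (hx i) _
    have hbdd : BddAbove (Set.range fun i => x i ^ (-α)) :=
      Set.Finite.bddAbove (Set.finite_range _)
    set m := ⨆ i, x i ^ (-α) with hm
    have hmle : ∀ i, x i ^ (-α) ≤ m := fun i => le_ciSup hbdd i
    have hm0 : 0 < m := lt_of_lt_of_le (htpos ⟨0, by omega⟩) (hmle _)
    have hms : m ≤ ∑ i, x i ^ (-α) :=
      ciSup_le fun i => Finset.single_le_sum (fun j _ => (htpos j).le) (Finset.mem_univ i)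
    have hsd : ∑ i, x i ^ (-α) ≤ d * m := by
      calc ∑ i, x i ^ (-α) ≤ ∑ _i : Fin d, m := Finset.sum_le_sum (fun i _ => hmle i)
        _ = d * m := by simp [mul_comm]
    have habs : |Real.exp (-m) - Real.exp (-(∑ i, x i ^ (-α)))|
        = Real.exp (-m) - Real.exp (-(∑ i, x i ^ (-α))) := by
      apply abs_of_nonneg
      have := Real.exp_le_exp.mpr (neg_le_neg hms)
      linarith
    rw [habs]
    have h1 : Real.exp (-((d:ℝ) * m)) ≤ Real.exp (-(∑ i, x i ^ (-α))) :=
      Real.exp_le_exp.mpr (by linarith)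
    have h2 : Real.exp (-((d:ℝ) * m)) = (Real.exp (-m)) ^ d := by
      rw [← Real.exp_nat_mul]
      ring_nf
    have hkey := key_ineq d hd (Real.exp (-m)) (Real.exp_nonneg _)
    rw [← h2] at hkey
    rw [hM_def, hc_def]
    linarith
  have hmem : M ∈ {r : ℝ | ∃ x : Fin d → ℝ, (∀ i, 0 < x i) ∧
      r = |Real.exp (-(⨆ i, x i ^ (-α))) - Real.exp (-(∑ i, x i ^ (-α)))|} := by
    set m0 := Real.log d / ((d:ℝ)-1) with hm0_def
    have hlog : 0 < Real.log d := Real.log_pos hD1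
    have hm0 : 0 < m0 := div_pos hlog (by linarith)
    refine ⟨fun _ => m0 ^ (-(1/α)), fun i => Real.rpow_pos_of_pos hm0 _, ?_⟩
    have hx' : (m0 ^ (-(1/α))) ^ (-α) = m0 := by
      rw [← Real.rpow_mul hm0.le]
      have : -(1/α) * (-α) = 1 := by field_simp
      rw [this, Real.rpow_one]
    simp only [hx']
    rw [ciSup_const, Finset.sum_const, Finset.card_univ, Fintype.card_fin, nsmul_eq_mul]
    have hexp : Real.exp (-m0) = c := by
      rw [hc_def, Real.rpow_def_of_pos hD0]
      congr 1
      rw [hm0_def]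
      have : (d:ℝ) - 1 ≠ 0 := by linarith
      field_simp
    have hexp2 : Real.exp (-((d:ℝ) * m0)) = c / d := by
      have h3 : -((d:ℝ) * m0) = (d:ℝ) * (-m0) := by ring
      rw [h3, Real.exp_nat_mul, hexp]
      exact cpow_d d hd
    rw [hexp, hexp2]
    have hle : c / d ≤ c := div_le_self hc.le hD1.le
    rw [abs_of_nonneg (by linarith), hM_def]
    field_simp
  apply le_antisymm
  · exact Real.sSup_le hub hM0
  · exact le_csSup ⟨M, hub⟩ hmem
end

section
/- Let d ≥ 2 be an integer and θ ∈ (0,1]. Then for all x ∈ (0,∞)^d, | exp( − Σ_{j=1}^d x_j^{−1} ) − exp( − ( Σ_{j=1}^d x_j^{−1/θ} )^{θ} ) | ≤ (d − d^{θ})/e. Consequently sup_{x ∈ (0,∞)^d} of the left-hand side is at most (d − d^{θ})/e. -/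
lemma nnreal_sum_rpow_le {ι : Type*} (s : Finset ι) (f : ι → NNReal) {p : ℝ}
    (hp0 : 0 < p) (hp1 : p ≤ 1) :
    (∑ i ∈ s, f i) ^ p ≤ ∑ i ∈ s, f i ^ p := by
  classical
  induction s using Finset.induction with
  | empty => simp [NNReal.zero_rpow hp0.ne']
  | insert a s hnot ih =>
    rw [Finset.sum_insert hnot, Finset.sum_insert hnot]
    calc _ ≤ _ := NNReal.rpow_add_le_add_rpow _ _ hp0.le hp1
    _ ≤ _ := by gcongr

lemma real_sum_rpow_le {ι : Type*} (s : Finset ι) (f : ι → ℝ) (hf : ∀ i ∈ s, 0 ≤ f i)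
    {p : ℝ} (hp0 : 0 < p) (hp1 : p ≤ 1) :
    (∑ i ∈ s, f i) ^ p ≤ ∑ i ∈ s, f i ^ p := by
  have h := nnreal_sum_rpow_le s (fun i => (f i).toNNReal) hp0 hp1
  have h' : ((((∑ i ∈ s, (f i).toNNReal)) ^ p : NNReal) : ℝ)
      ≤ ((∑ i ∈ s, (f i).toNNReal ^ p : NNReal) : ℝ) := by exact_mod_cast h
  rw [NNReal.coe_rpow, NNReal.coe_sum, NNReal.coe_sum] at h'
  simp only [NNReal.coe_rpow] at h'
  calc (∑ i ∈ s, f i) ^ p = (∑ i ∈ s, ((f i).toNNReal : ℝ)) ^ p := by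
        congr 1; exact Finset.sum_congr rfl fun i hi => (Real.coe_toNNReal _ (hf i hi)).symm
    _ ≤ ∑ i ∈ s, ((f i).toNNReal : ℝ) ^ p := h'
    _ = ∑ i ∈ s, f i ^ p := Finset.sum_congr rfl fun i hi => by
        rw [Real.coe_toNNReal _ (hf i hi)]

/-- For `1 ≤ c` and `0 ≤ t`, `exp (-t) - exp (-(c*t)) ≤ (c-1)/e`. -/
lemma exp_diff_le (c t : ℝ) (hc : 1 ≤ c) (ht : 0 ≤ t) :
    Real.exp (-t) - Real.exp (-(c * t)) ≤ (c - 1) / Real.exp 1 := by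
  have h1 : Real.exp (-t) - Real.exp (-(c * t))
      = Real.exp (-t) * (1 - Real.exp (-((c - 1) * t))) := by
    rw [mul_sub, mul_one, ← Real.exp_add]; ring_nf
  have h2 : 1 - Real.exp (-((c - 1) * t)) ≤ (c - 1) * t := by
    have := Real.add_one_le_exp (-((c - 1) * t)); linarith
  have h3 : t * Real.exp (-t) ≤ Real.exp (-1) := by
    have := Real.add_one_le_exp (t - 1)
    have h4 : t ≤ Real.exp (t - 1) := by linarith
    calc t * Real.exp (-t) ≤ Real.exp (t - 1) * Real.exp (-t) :=
          mul_le_mul_of_nonneg_right h4 (Real.exp_pos _).le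
      _ = Real.exp (-1) := by rw [← Real.exp_add]; ring_nf
  have hc1 : 0 ≤ c - 1 := by linarith
  calc Real.exp (-t) - Real.exp (-(c * t))
      ≤ Real.exp (-t) * ((c - 1) * t) := by
        rw [h1]; exact mul_le_mul_of_nonneg_left h2 (Real.exp_pos _).le
    _ = (c - 1) * (t * Real.exp (-t)) := by ring
    _ ≤ (c - 1) * Real.exp (-1) := mul_le_mul_of_nonneg_left h3 hc1
    _ = (c - 1) / Real.exp 1 := by rw [Real.exp_neg, div_eq_mul_inv]

/-- Example 4.6: the Kolmogorov distance between the independent max-stable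
distribution with unit Fréchet margins and the logistic max-stable distribution
with dependence parameter `θ ∈ (0,1]` is at most `(d − d^θ)/e`. -/
theorem kolmogorov_independent_logistic
    (d : ℕ) (hd : 2 ≤ d) (θ : ℝ) (hθ0 : 0 < θ) (hθ1 : θ ≤ 1)
    (x : Fin d → ℝ) (hx : ∀ i, 0 < x i) :
    |Real.exp (-(∑ j, x j ^ (-(1 : ℝ)))) -
      Real.exp (-((∑ j, x j ^ (-(1 / θ))) ^ θ))| ≤
    ((d : ℝ) - (d : ℝ) ^ θ) / Real.exp 1 := by
  have hθ0' : θ ≠ 0 := hθ0.ne'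
  set s : Fin d → ℝ := fun j => x j ^ (-(1 / θ)) with hs
  have hspos : ∀ j, 0 < s j := fun j => Real.rpow_pos_of_pos (hx j) _
  set S : ℝ := ∑ j, s j with hS
  have hSpos : 0 < S := Finset.sum_pos (fun j _ => hspos j) ⟨⟨0, by omega⟩, Finset.mem_univ _⟩
  set A : ℝ := ∑ j, x j ^ (-(1 : ℝ)) with hA
  have hAeq : A = ∑ j, s j ^ θ := by
    refine Finset.sum_congr rfl fun j _ => ?_
    rw [hs, ← Real.rpow_mul (hx j).le]
    congr 1
    field_simp
  have hdpos : (0 : ℝ) < d := by positivity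
  have hd1 : (1 : ℝ) ≤ d := by exact_mod_cast Nat.one_le_of_lt hd
  -- Inequality 1 : S^θ ≤ A
  have hineq1 : S ^ θ ≤ A := by
    rw [hAeq, hS]
    exact real_sum_rpow_le _ _ (fun j _ => (hspos j).le) hθ0 hθ1
  -- Inequality 2 : A ≤ d^(1-θ) * S^θ
  have hineq2 : A ≤ (d : ℝ) ^ (1 - θ) * S ^ θ := by
    have key := Real.rpow_arith_mean_le_arith_mean_rpow Finset.univ
      (fun _ : Fin d => (d : ℝ)⁻¹) (fun j => s j ^ θ)
      (fun i _ => inv_nonneg.2 hdpos.le)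
      (by simp [Finset.sum_const, Finset.card_univ]
          exact mul_inv_cancel₀ hdpos.ne')
      (fun i _ => (Real.rpow_pos_of_pos (hspos i) θ).le)
      (p := 1 / θ)
      (by rw [le_div_iff₀ hθ0]; linarith)
    have hz : ∀ j : Fin d, (s j ^ θ) ^ ((1:ℝ)/θ) = s j := by
      intro j
      rw [← Real.rpow_mul (hspos j).le, mul_one_div, div_self hθ0', Real.rpow_one]
    simp only [hz] at key
    rw [← Finset.mul_sum, ← Finset.mul_sum] at key
    have hA'nn : 0 ≤ (d : ℝ)⁻¹ * ∑ j, s j ^ θ :=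
      mul_nonneg (inv_nonneg.2 hdpos.le)
        (Finset.sum_nonneg fun j _ => (Real.rpow_pos_of_pos (hspos j) θ).le)
    have key2 : (d : ℝ)⁻¹ * ∑ j, s j ^ θ ≤ ((d : ℝ)⁻¹ * S) ^ θ := by
      have := Real.rpow_le_rpow (Real.rpow_nonneg hA'nn _) key hθ0.le
      rwa [← Real.rpow_mul hA'nn, one_div, inv_mul_cancel₀ hθ0', Real.rpow_one] at this
    have key3 : ∑ j, s j ^ θ ≤ (d : ℝ) * ((d : ℝ)⁻¹ * S) ^ θ := by
      rw [← inv_mul_le_iff₀ hdpos]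
      exact key2
    calc A = ∑ j, s j ^ θ := hAeq
      _ ≤ (d : ℝ) * ((d : ℝ)⁻¹ * S) ^ θ := key3
      _ = (d : ℝ) ^ (1 - θ) * S ^ θ := by
          rw [Real.mul_rpow (by positivity) hSpos.le, Real.inv_rpow hdpos.le,
            Real.rpow_sub hdpos, Real.rpow_one, ← mul_assoc, div_eq_mul_inv]
  set c : ℝ := (d : ℝ) ^ (1 - θ) with hc
  have hc1 : 1 ≤ c := Real.one_le_rpow hd1 (by linarith)
  set t : ℝ := S ^ θ with ht
  have htpos : 0 < t := Real.rpow_pos_of_pos hSpos _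
  have hdθ1 : 1 ≤ (d : ℝ) ^ θ := Real.one_le_rpow hd1 hθ0.le
  have hprod : (d : ℝ) ^ θ * c = d := by
    rw [hc, ← Real.rpow_add hdpos, add_sub_cancel, Real.rpow_one]
  have habs : |Real.exp (-A) - Real.exp (-t)| = Real.exp (-t) - Real.exp (-A) := by
    rw [abs_sub_comm, abs_of_nonneg]
    have : -A ≤ -t := by linarith
    linarith [Real.exp_le_exp.2 this]
  calc |Real.exp (-A) - Real.exp (-t)|
      = Real.exp (-t) - Real.exp (-A) := habs
    _ ≤ Real.exp (-t) - Real.exp (-(c * t)) := by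
        have : -(c * t) ≤ -A := by linarith [hineq2]
        linarith [Real.exp_le_exp.2 this]
    _ ≤ (c - 1) / Real.exp 1 := exp_diff_le c t hc1 htpos.le
    _ ≤ ((d : ℝ) - (d : ℝ) ^ θ) / Real.exp 1 := by
        have hnum : c - 1 ≤ (d : ℝ) - (d : ℝ) ^ θ := by nlinarith [hprod, hdθ1, hc1]
        gcongr
end

section
/- Let d ≥ 2 be an integer and θ ∈ (0,1]. Then for all x ∈ (0,∞)^d, | exp( − max_{1≤j≤d} x_j^{−1} ) − exp( − ( Σ_{j=1}^d x_j^{−1/θ} )^{θ} ) | ≤ (d^{θ} − 1)/e. Consequently sup_{x ∈ (0,∞)^d} of the left-hand side is at most (d^{θ} − 1)/e. -/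
/-- Example 4.6: the Kolmogorov distance between the comonotonic max-stable
distribution with unit Fréchet margins and the logistic max-stable distribution
with dependence parameter `θ ∈ (0,1]` is at most `(d^θ − 1)/e`. -/
theorem kolmogorov_comonotonic_logistic
    (d : ℕ) (hd : 2 ≤ d) (θ : ℝ) (hθ0 : 0 < θ) (hθ1 : θ ≤ 1)
    (x : Fin d → ℝ) (hx : ∀ i, 0 < x i) :
    |Real.exp (-(⨆ j, x j ^ (-(1 : ℝ)))) -
      Real.exp (-((∑ j, x j ^ (-(1 / θ))) ^ θ))| ≤
    ((d : ℝ) ^ θ - 1) / Real.exp 1 := by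
  haveI : Nonempty (Fin d) := ⟨⟨0, by omega⟩⟩
  have hθ : θ ≠ 0 := ne_of_gt hθ0
  set M : ℝ := ⨆ j, x j ^ (-(1 : ℝ)) with hMdef
  set T : ℝ := ∑ j, x j ^ (-(1 / θ)) with hTdef
  have hy : ∀ j : Fin d, 0 < x j ^ (-(1 / θ)) := fun j =>
    Real.rpow_pos_of_pos (hx j) _
  have hbdd : BddAbove (Set.range fun j => x j ^ (-(1 : ℝ))) :=
    (Set.finite_range _).bddAbove
  have heq : ∀ j : Fin d, x j ^ (-(1 : ℝ)) = (x j ^ (-(1 / θ))) ^ θ := by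
    intro j
    rw [← Real.rpow_mul (hx j).le]
    congr 1
    field_simp
  have hT : 0 < T := Finset.sum_pos (fun j _ => hy j) Finset.univ_nonempty
  -- M ≤ T^θ
  have hMS : M ≤ T ^ θ := by
    apply ciSup_le
    intro j
    rw [heq j]
    exact Real.rpow_le_rpow (hy j).le
      (Finset.single_le_sum (fun k _ => (hy k).le) (Finset.mem_univ j)) hθ0.le
  have hMpos : 0 < M := by
    have h0 := le_ciSup hbdd (⟨0, by omega⟩ : Fin d)
    exact lt_of_lt_of_le (Real.rpow_pos_of_pos (hx _) _) h0
  -- each term ≤ M^(1/θ)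
  have hterm : ∀ j : Fin d, x j ^ (-(1 / θ)) ≤ M ^ (1 / θ) := by
    intro j
    have h1 : (x j ^ (-(1 / θ))) ^ θ ≤ M := by
      rw [← heq j]; exact le_ciSup hbdd j
    have h2 : ((x j ^ (-(1 / θ))) ^ θ) ^ (1 / θ) ≤ M ^ (1 / θ) :=
      Real.rpow_le_rpow (Real.rpow_nonneg (hy j).le _) h1 (by positivity)
    rwa [← Real.rpow_mul (hy j).le, mul_one_div_cancel hθ, Real.rpow_one] at h2
  have hTle : T ≤ d * M ^ (1 / θ) := by
    calc T ≤ ∑ _j : Fin d, M ^ (1 / θ) :=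
            Finset.sum_le_sum fun j _ => hterm j
      _ = d * M ^ (1 / θ) := by
            rw [Finset.sum_const, Finset.card_univ, Fintype.card_fin,
              nsmul_eq_mul]
  have hSle : T ^ θ ≤ (d : ℝ) ^ θ * M := by
    have hd0 : (0 : ℝ) ≤ d := by positivity
    calc T ^ θ ≤ ((d : ℝ) * M ^ (1 / θ)) ^ θ :=
          Real.rpow_le_rpow hT.le hTle hθ0.le
      _ = (d : ℝ) ^ θ * (M ^ (1 / θ)) ^ θ :=
          Real.mul_rpow hd0 (Real.rpow_nonneg hMpos.le _)
      _ = (d : ℝ) ^ θ * M := by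
          rw [← Real.rpow_mul hMpos.le, one_div_mul_cancel hθ, Real.rpow_one]
  have hdθ1 : (1 : ℝ) ≤ (d : ℝ) ^ θ := by
    have : (d : ℝ) ^ (0 : ℝ) ≤ (d : ℝ) ^ θ :=
      Real.rpow_le_rpow_of_exponent_le (by exact_mod_cast hd.trans' (by norm_num)) hθ0.le
    simpa using this
  -- exp(-M) - exp(-S) ≥ 0
  set S : ℝ := T ^ θ with hSdef
  have hexp_le : Real.exp (-S) ≤ Real.exp (-M) :=
    Real.exp_le_exp.2 (by linarith)
  rw [abs_of_nonneg (by linarith)]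
  -- exp(-M) - exp(-S) ≤ (S - M) * exp(-M)
  have key : Real.exp (-M) - Real.exp (-S) ≤ (S - M) * Real.exp (-M) := by
    have h1 : 1 + -(S - M) ≤ Real.exp (-(S - M)) := by
      have := Real.add_one_le_exp (-(S - M)); linarith
    have h2 : Real.exp (-S) = Real.exp (-M) * Real.exp (-(S - M)) := by
      rw [← Real.exp_add]; ring_nf
    nlinarith [Real.exp_pos (-M), Real.exp_pos (-(S - M))]
  have hSM : S - M ≤ ((d : ℝ) ^ θ - 1) * M := by nlinarith
  have hMe : M * Real.exp (-M) ≤ Real.exp (-1) := by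
    have h1 : M - 1 + 1 ≤ Real.exp (M - 1) := Real.add_one_le_exp (M - 1)
    have h2 : Real.exp (M - 1) * Real.exp (-M) = Real.exp (-1) := by
      rw [← Real.exp_add]; ring_nf
    nlinarith [Real.exp_pos (-M)]
  calc Real.exp (-M) - Real.exp (-S) ≤ (S - M) * Real.exp (-M) := key
    _ ≤ ((d : ℝ) ^ θ - 1) * M * Real.exp (-M) := by
        have := Real.exp_pos (-M)
        nlinarith
    _ ≤ ((d : ℝ) ^ θ - 1) * Real.exp (-1) := by
        nlinarith
    _ = ((d : ℝ) ^ θ - 1) / Real.exp 1 := by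
        rw [Real.exp_neg]; ring
end

section
/- Let d ≥ 1. Let ψ : [0,∞) → ℝ be differentiable, strictly decreasing, with ψ(0) = 1, 0 < ψ(t) ≤ 1 for all t ≥ 0, and set K_ψ = sup_{t ≥ 0} t·|ψ'(t)|, assumed finite. Let φ : (0,1] → [0,∞) satisfy ψ(φ(u)) = u for all u ∈ (0,1]. Let ℓ₁, ℓ₂ : [0,∞)^d → [0,∞) be 1-homogeneous (ℓ_k(c·w) = c·ℓ_k(w) for c > 0) and satisfy ℓ_k(w) ≥ max_{1≤i≤d} w_i for all w ∈ [0,∞)^d, k = 1,2. Then for every u ∈ (0,1]^d, | ψ( ℓ₁(φ(u₁),…,φ(u_d)) ) − ψ( ℓ₂(φ(u₁),…,φ(u_d)) ) | ≤ K_ψ · sup { |ℓ₁(w) − ℓ₂(w)| : w ∈ [0,∞)^d, max_{1≤i≤d} w_i = 1 }. -/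
lemma archimax_mvt_aux (ψ : ℝ → ℝ)
    (hdiff : ∀ t ∈ Set.Ici (0 : ℝ), DifferentiableAt ℝ ψ t)
    (Kψ : ℝ) (hK : ∀ t ∈ Set.Ici (0 : ℝ), t * |deriv ψ t| ≤ Kψ)
    (hKnn : 0 ≤ Kψ)
    (M : ℝ) (hM : 0 < M) :
    ∀ a b : ℝ, M ≤ a → M ≤ b → a ≤ b → |ψ a - ψ b| ≤ Kψ / M * |a - b| := by
  intro a b ha hb hab
  rcases eq_or_lt_of_le hab with rfl | hlt
  · simp
  · have hcont : ContinuousOn ψ (Set.Icc a b) := fun x hx =>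
      ((hdiff x (le_trans (le_of_lt hM) (le_trans ha hx.1))).continuousAt).continuousWithinAt
    have hd : DifferentiableOn ℝ ψ (Set.Ioo a b) := fun x hx =>
      (hdiff x (le_trans (le_of_lt hM) (le_trans ha hx.1.le))).differentiableWithinAt
    obtain ⟨ξ, hξ, hslope⟩ := exists_deriv_eq_slope ψ hlt hcont hd
    have hξpos : 0 < ξ := lt_of_lt_of_le hM (le_trans ha hξ.1.le)
    have hξM : M ≤ ξ := le_trans ha hξ.1.le
    have h1 : ψ b - ψ a = deriv ψ ξ * (b - a) := by
      rw [hslope, div_mul_cancel₀ _ (sub_ne_zero.mpr (ne_of_gt hlt))]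
    have h2 : |ψ a - ψ b| = |deriv ψ ξ| * (b - a) := by
      rw [abs_sub_comm, h1, abs_mul, abs_of_nonneg (by linarith : (0:ℝ) ≤ b - a)]
    have h3 : |deriv ψ ξ| ≤ Kψ / M := by
      rw [le_div_iff₀ hM]
      calc |deriv ψ ξ| * M ≤ ξ * |deriv ψ ξ| := by nlinarith [abs_nonneg (deriv ψ ξ)]
        _ ≤ Kψ := hK ξ (le_of_lt hξpos)
    rw [h2, abs_sub_comm a b, abs_of_nonneg (by linarith : (0:ℝ) ≤ b - a)]
    exact mul_le_mul_of_nonneg_right h3 (by linarith)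

/-- Kolmogorov distance bound for Archimax copulas sharing the generator `ψ`
(Section 4.3): with `K_ψ = sup_{t ≥ 0} t |ψ'(t)|` and stable tail dependence
functions `ℓ₁, ℓ₂`, for every `u ∈ (0,1]^d`,
`|ψ(ℓ₁(φ(u))) − ψ(ℓ₂(φ(u)))| ≤ K_ψ · sup_{max_i w_i = 1} |ℓ₁(w) − ℓ₂(w)|`,
formulated with upper bounds `Kψ` and `C` for the respective suprema. -/
theorem archimax_kolmogorov_bound
    (d : ℕ) (hd : 0 < d)
    (ψ : ℝ → ℝ)
    (hdiff : ∀ t ∈ Set.Ici (0 : ℝ), DifferentiableAt ℝ ψ t)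
    (hanti : StrictAntiOn ψ (Set.Ici (0 : ℝ)))
    (hψ0 : ψ 0 = 1)
    (hψrange : ∀ t ∈ Set.Ici (0 : ℝ), 0 < ψ t ∧ ψ t ≤ 1)
    (Kψ : ℝ) (hK : ∀ t ∈ Set.Ici (0 : ℝ), t * |deriv ψ t| ≤ Kψ)
    (φ : ℝ → ℝ)
    (hφ : ∀ u : ℝ, 0 < u → u ≤ 1 → 0 ≤ φ u ∧ ψ (φ u) = u)
    (ℓ₁ ℓ₂ : (Fin d → ℝ) → ℝ)
    (hnn₁ : ∀ w : Fin d → ℝ, (∀ i, 0 ≤ w i) → 0 ≤ ℓ₁ w)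
    (hnn₂ : ∀ w : Fin d → ℝ, (∀ i, 0 ≤ w i) → 0 ≤ ℓ₂ w)
    (hhom₁ : ∀ c : ℝ, 0 < c → ∀ w : Fin d → ℝ, (∀ i, 0 ≤ w i) →
      ℓ₁ (c • w) = c * ℓ₁ w)
    (hhom₂ : ∀ c : ℝ, 0 < c → ∀ w : Fin d → ℝ, (∀ i, 0 ≤ w i) →
      ℓ₂ (c • w) = c * ℓ₂ w)
    (hlb₁ : ∀ w : Fin d → ℝ, (∀ i, 0 ≤ w i) → (⨆ i, w i) ≤ ℓ₁ w)
    (hlb₂ : ∀ w : Fin d → ℝ, (∀ i, 0 ≤ w i) → (⨆ i, w i) ≤ ℓ₂ w)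
    (C : ℝ)
    (hC : ∀ w : Fin d → ℝ, (∀ i, 0 ≤ w i) → (⨆ i, w i) = 1 → |ℓ₁ w - ℓ₂ w| ≤ C) :
    ∀ u : Fin d → ℝ, (∀ i, 0 < u i ∧ u i ≤ 1) →
      |ψ (ℓ₁ fun i => φ (u i)) - ψ (ℓ₂ fun i => φ (u i))| ≤ Kψ * C := by
  intro u hu
  haveI : Nonempty (Fin d) := ⟨⟨0, hd⟩⟩
  set w : Fin d → ℝ := fun i => φ (u i) with hw
  have hwnn : ∀ i, 0 ≤ w i := fun i => (hφ (u i) (hu i).1 (hu i).2).1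
  have hKnn : 0 ≤ Kψ := le_trans (by positivity) (hK 1 (by norm_num))
  have hCnn : 0 ≤ C := by
    refine le_trans (abs_nonneg _) (hC (fun _ => 1) (fun _ => zero_le_one) ?_)
    exact ciSup_const
  set M := ⨆ i, w i with hM
  have hbdd : BddAbove (Set.range w) := Set.Finite.bddAbove (Set.finite_range w)
  have hle : ∀ i, w i ≤ M := fun i => le_ciSup hbdd i
  have hMnn : 0 ≤ M := le_trans (hwnn (Classical.arbitrary _)) (hle _)
  rcases eq_or_lt_of_le hMnn with hM0 | hMpos
  · have hw0 : w = 0 :=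
      funext fun i => le_antisymm (le_of_le_of_eq (hle i) hM0.symm) (hwnn i)
    have h1 : ℓ₁ w = 0 := by
      have := hhom₁ 2 (by norm_num) w hwnn
      rw [hw0] at this ⊢
      simp at this
      linarith
    have h2 : ℓ₂ w = 0 := by
      have := hhom₂ 2 (by norm_num) w hwnn
      rw [hw0] at this ⊢
      simp at this
      linarith
    simp only [hw] at h1 h2
    rw [h1, h2]
    simpa using mul_nonneg hKnn hCnn
  · set v : Fin d → ℝ := M⁻¹ • w with hv
    have hvnn : ∀ i, 0 ≤ v i := fun i => mul_nonneg (inv_nonneg.mpr hMnn) (hwnn i)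
    have hvsup : (⨆ i, v i) = 1 := by
      have : (⨆ i, M⁻¹ * w i) = M⁻¹ * M := by
        rw [← Real.mul_iSup_of_nonneg (inv_nonneg.mpr hMnn)]
      simp only [hv, Pi.smul_apply, smul_eq_mul]
      rw [this, inv_mul_cancel₀ (ne_of_gt hMpos)]
    have hwv : w = M • v := by
      funext i
      simp [hv, ← mul_assoc, mul_inv_cancel₀ (ne_of_gt hMpos)]
    have hℓ₁ : ℓ₁ w = M * ℓ₁ v := by rw [hwv]; exact hhom₁ M hMpos v hvnn
    have hℓ₂ : ℓ₂ w = M * ℓ₂ v := by rw [hwv]; exact hhom₂ M hMpos v hvnn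
    have hgd : |ℓ₁ w - ℓ₂ w| ≤ M * C := by
      rw [hℓ₁, hℓ₂, ← mul_sub, abs_mul, abs_of_pos hMpos]
      exact mul_le_mul_of_nonneg_left (hC v hvnn hvsup) hMnn
    have hM₁ : M ≤ ℓ₁ w := hlb₁ w hwnn
    have hM₂ : M ≤ ℓ₂ w := hlb₂ w hwnn
    have key : ∀ a b : ℝ, M ≤ a → M ≤ b → |ψ a - ψ b| ≤ Kψ / M * |a - b| := by
      intro a b ha hb
      rcases le_total a b with h | h
      · exact archimax_mvt_aux ψ hdiff Kψ hK hKnn M hMpos a b ha hb h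
      · rw [abs_sub_comm a b, abs_sub_comm (ψ a)]
        exact archimax_mvt_aux ψ hdiff Kψ hK hKnn M hMpos b a hb ha h
    calc |ψ (ℓ₁ w) - ψ (ℓ₂ w)| ≤ Kψ / M * |ℓ₁ w - ℓ₂ w| := key _ _ hM₁ hM₂
      _ ≤ Kψ / M * (M * C) := by
          exact mul_le_mul_of_nonneg_left hgd (div_nonneg hKnn hMnn)
      _ = Kψ * C := by
          field_simp
end
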